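/- arXiv:1207.2500 — 5 statements merged into one kernel-verified Lean document; each statement's English description precedes it below -/
import Mathlib

section
/- Let n ≥ 1, α > 0 and q > 1 + α/n. Set β = 1/(q−1), let γ satisfy 1/(α n (q−1)) < γ ≤ 1/α², and let 0 < κ ≤ (α n (γ − 1/(α n (q−1))))^{1/(q−1)}. Define u(t,x) = κ (t+1)^{−β} exp(−γ (1+|x|²)^{α/2}/(t+1)) for (t,x) ∈ (0,∞) × ℝⁿ. Then u is positive, smooth, and satisfies at every point of (0,∞) × ℝⁿ the pointwise differential inequality ∂u/∂t ≥ Σ_{i=1}^n ∂/∂x_i ( (1+|x|²)^{(2−α)/2} ∂u/∂x_i ) + u^q. -/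
open Real

noncomputable section

/-- Euclidean space ℝⁿ. -/
abbrev Xn (n : ℕ) : Type := EuclideanSpace ℝ (Fin n)

/-- Partial derivative `∂w/∂x_i` of `w : ℝⁿ → ℝ` at `y`. -/
noncomputable def pX {n : ℕ} (w : Xn n → ℝ) (i : Fin n) (y : Xn n) : ℝ :=
  fderiv ℝ w y (EuclideanSpace.single i 1)

/-- The divergence-form operator
`Lw = Σ_i ∂/∂x_i ((1+|x|²)^{(2−α)/2} ∂w/∂x_i)` at `x`. -/
noncomputable def Lop {n : ℕ} (α : ℝ) (w : Xn n → ℝ) (x : Xn n) : ℝ :=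
  ∑ i, fderiv ℝ (fun y => (1 + ‖y‖ ^ 2) ^ ((2 - α) / 2) * pX w i y) x
    (EuclideanSpace.single i 1)

namespace SuperAux

variable {n : ℕ}

lemma N_pos (y : Xn n) : (0:ℝ) < 1 + ‖y‖ ^ 2 := by positivity

lemma hasFDerivAt_base (x : Xn n) :
    HasFDerivAt (fun y : Xn n => 1 + ‖y‖ ^ 2) ((2:ℕ) • (innerSL ℝ x)) x :=
  ((hasStrictFDerivAt_norm_sq x).hasFDerivAt).const_add 1

lemma pX_of_hasFDerivAt {w : Xn n → ℝ} {D : Xn n →L[ℝ] ℝ} {y : Xn n}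
    (h : HasFDerivAt w D y) (i : Fin n) :
    pX w i y = D (EuclideanSpace.single i 1) := by
  unfold pX; rw [h.fderiv]

lemma hasFDerivAt_E (a b : ℝ) (y : Xn n) :
    HasFDerivAt (fun y : Xn n => Real.exp (b * (1 + ‖y‖ ^ 2) ^ a))
      ((Real.exp (b * (1 + ‖y‖ ^ 2) ^ a)) • (b • ((a * (1 + ‖y‖ ^ 2) ^ (a - 1)) •
        ((2:ℕ) • (innerSL ℝ y : Xn n →L[ℝ] ℝ))))) y :=
  (((hasFDerivAt_base y).rpow_const (Or.inl (N_pos y).ne')).const_mul b).exp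

lemma pX_AE (A a b : ℝ) (y : Xn n) (i : Fin n) :
    pX (fun y : Xn n => A * Real.exp (b * (1 + ‖y‖ ^ 2) ^ a)) i y
      = A * Real.exp (b * (1 + ‖y‖ ^ 2) ^ a) * b * a * (1 + ‖y‖ ^ 2) ^ (a - 1) * (2 * y i) := by
  rw [pX_of_hasFDerivAt ((hasFDerivAt_E a b y).const_mul A) i]
  simp [EuclideanSpace.inner_single_right]
  ring

lemma fderiv_term (K a b : ℝ) (x : Xn n) (i : Fin n) :
    fderiv ℝ (fun y : Xn n => K * (y i * Real.exp (b * (1 + ‖y‖ ^ 2) ^ a))) x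
      (EuclideanSpace.single i 1)
    = K * Real.exp (b * (1 + ‖x‖ ^ 2) ^ a)
        + K * Real.exp (b * (1 + ‖x‖ ^ 2) ^ a) * b * a * (1 + ‖x‖ ^ 2) ^ (a - 1)
            * (2 * (x i ^ 2)) := by
  have h : HasFDerivAt (fun y : Xn n => K * (y i * Real.exp (b * (1 + ‖y‖ ^ 2) ^ a)))
      (K • ((x i) • ((Real.exp (b * (1 + ‖x‖ ^ 2) ^ a)) • (b • ((a * (1 + ‖x‖ ^ 2) ^ (a - 1)) •
        ((2:ℕ) • (innerSL ℝ x : Xn n →L[ℝ] ℝ)))))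
        + (Real.exp (b * (1 + ‖x‖ ^ 2) ^ a)) • (EuclideanSpace.proj i : Xn n →L[ℝ] ℝ))) x :=
    (((EuclideanSpace.proj i : Xn n →L[ℝ] ℝ).hasFDerivAt).mul (hasFDerivAt_E a b x)).const_mul K
  rw [h.fderiv]
  simp [EuclideanSpace.inner_single_right]
  ring

lemma ineq_aux (g a S Nm : ℝ) (hg0 : 0 < g) (hga : g * a ≤ 1) (hNm : 0 < Nm) (hS : 0 ≤ S) :
    g ^ 2 * a * S * Nm ≤ g * ((1 + S) * Nm) := by
  nlinarith [mul_nonneg (mul_nonneg hg0.le hNm.le) (mul_nonneg (sub_nonneg.mpr hga) hS)]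

lemma sum_sq (x : Xn n) : ∑ i, x i ^ 2 = ‖x‖ ^ 2 := by
  rw [EuclideanSpace.norm_eq, Real.sq_sqrt (by positivity)]
  simp [sq_abs]

end SuperAux

open SuperAux

/-- Example 2: for `q > 1 + α/n` the explicit function
`u(t,x) = κ (t+1)^{−β} exp(−γ (1+|x|²)^{α/2}/(t+1))` is a positive smooth
entire classical solution of `u_t ≥ Lu + u^q` in `(0,∞) × ℝⁿ`, where `L` has
coefficients `a_{ij}(t,x) = (1+|x|²)^{(2−α)/2} δ_{ij}`. -/
theorem example_supersolution
    (n : ℕ) (hn : 1 ≤ n) (α q β γ κ : ℝ)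
    (hα : 0 < α) (hq : 1 + α / n < q)
    (hβ : β = 1 / (q - 1))
    (hγ1 : 1 / (α * n * (q - 1)) < γ) (hγ2 : γ ≤ 1 / α ^ 2)
    (hκ1 : 0 < κ)
    (hκ2 : κ ≤ (α * n * (γ - 1 / (α * n * (q - 1)))) ^ (1 / (q - 1)))
    (u : ℝ → Xn n → ℝ)
    (hu : ∀ t x, u t x =
      κ * (t + 1) ^ (-β) * Real.exp (-γ * (1 + ‖x‖ ^ 2) ^ (α / 2) / (t + 1))) :
    -- `u` is positive
    (∀ t, 0 < t → ∀ x, 0 < u t x) ∧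
    -- `u` is smooth on `(0,∞) × ℝⁿ`
    ContDiffOn ℝ (⊤ : ℕ∞) (fun p : ℝ × Xn n => u p.1 p.2) {p : ℝ × Xn n | 0 < p.1} ∧
    -- `u` satisfies `∂u/∂t ≥ Lu + u^q` at every point of `(0,∞) × ℝⁿ`
    (∀ t, 0 < t → ∀ x : Xn n,
      deriv (fun s => u s x) t ≥ Lop α (u t) x + u t x ^ q) := by
  -- basic numeric facts
  have hnR : (0:ℝ) < (n:ℝ) := by exact_mod_cast Nat.lt_of_lt_of_le Nat.zero_lt_one hn
  have hq1 : (0:ℝ) < q - 1 := by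
    have : 0 < α / n := div_pos hα hnR
    linarith
  have hγ0 : 0 < γ := lt_trans (by positivity) hγ1
  have hγα2 : γ * α ^ 2 ≤ 1 := by
    rw [le_div_iff₀ (by positivity)] at hγ2; linarith
  have hM : 0 < α * n * (γ - 1 / (α * n * (q - 1))) := by
    have h1 : 0 < α * n * (q - 1) := by positivity
    have h2 : 1 / (α * n * (q - 1)) < γ := hγ1
    have : 0 < γ - 1 / (α * n * (q - 1)) := by linarith
    positivity
  have hMeq : α * n * (γ - 1 / (α * n * (q - 1))) = α * n * γ - β := by
    rw [hβ]; field_simp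
  have hκq : κ ^ (q - 1) ≤ α * n * γ - β := by
    rw [← hMeq]
    calc κ ^ (q - 1) ≤ ((α * n * (γ - 1 / (α * n * (q - 1)))) ^ (1 / (q - 1))) ^ (q - 1) :=
          Real.rpow_le_rpow hκ1.le hκ2 hq1.le
      _ = (α * n * (γ - 1 / (α * n * (q - 1)))) ^ ((1 / (q - 1)) * (q - 1)) :=
          (Real.rpow_mul hM.le _ _).symm
      _ = _ := by rw [one_div_mul_cancel hq1.ne', Real.rpow_one]
  refine ⟨?_, ?_, ?_⟩
  · -- positivity
    intro t ht x
    rw [hu]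
    have : (0:ℝ) < t + 1 := by linarith
    positivity
  · -- smoothness
    have hfun : (fun p : ℝ × Xn n => u p.1 p.2)
        = fun p : ℝ × Xn n =>
            κ * (p.1 + 1) ^ (-β) * Real.exp (-γ * (1 + ‖p.2‖ ^ 2) ^ (α / 2) / (p.1 + 1)) :=
      funext fun p => hu p.1 p.2
    rw [hfun]
    intro p hp
    have hT : (0:ℝ) < p.1 + 1 := by have : 0 < p.1 := hp; linarith
    have h1 : ContDiffAt ℝ (⊤ : ℕ∞) (fun p : ℝ × Xn n => p.1 + 1) p :=
      contDiff_fst.contDiffAt.add contDiffAt_const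
    have hA : ContDiffAt ℝ (⊤ : ℕ∞) (fun p : ℝ × Xn n => (p.1 + 1) ^ (-β)) p :=
      h1.rpow_const_of_ne hT.ne'
    have hN : ContDiffAt ℝ (⊤ : ℕ∞) (fun p : ℝ × Xn n => 1 + ‖p.2‖ ^ 2) p :=
      contDiffAt_const.add (((contDiff_norm_sq ℝ).comp contDiff_snd).contDiffAt)
    have hP : ContDiffAt ℝ (⊤ : ℕ∞) (fun p : ℝ × Xn n => (1 + ‖p.2‖ ^ 2) ^ (α / 2)) p :=
      hN.rpow_const_of_ne (N_pos p.2).ne'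
    have hquot : ContDiffAt ℝ (⊤ : ℕ∞)
        (fun p : ℝ × Xn n => -γ * (1 + ‖p.2‖ ^ 2) ^ (α / 2) / (p.1 + 1)) p :=
      ((contDiffAt_const (c := -γ)).mul hP).div h1 hT.ne'
    exact ((contDiffAt_const.mul hA).mul hquot.exp).contDiffWithinAt
  · -- the differential inequality
    intro t ht x
    have hT : (0:ℝ) < t + 1 := by linarith
    have hw : u t = fun y : Xn n =>
        κ * (t + 1) ^ (-β) * Real.exp (-γ / (t + 1) * (1 + ‖y‖ ^ 2) ^ (α / 2)) := by
      funext y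
      rw [hu t y, show -γ * (1 + ‖y‖ ^ 2) ^ (α / 2) / (t + 1)
        = -γ / (t + 1) * (1 + ‖y‖ ^ 2) ^ (α / 2) from by ring]
    -- time derivative
    have hD : deriv (fun s => u s x) t
        = κ * (t + 1) ^ (-β) * Real.exp (-γ * (1 + ‖x‖ ^ 2) ^ (α / 2) / (t + 1))
          * (-β / (t + 1) + γ * (1 + ‖x‖ ^ 2) ^ (α / 2) / (t + 1) ^ 2) := by
      have h1 : HasDerivAt (fun s : ℝ => s + 1) 1 t := (hasDerivAt_id t).add_const 1
      have h2 : HasDerivAt (fun s : ℝ => (s + 1) ^ (-β)) (1 * -β * (t + 1) ^ (-β - 1)) t :=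
        h1.rpow_const (Or.inl hT.ne')
      have h3 : HasDerivAt (fun s : ℝ => -γ * (1 + ‖x‖ ^ 2) ^ (α / 2) / (s + 1))
          ((0 * (t + 1) - -γ * (1 + ‖x‖ ^ 2) ^ (α / 2) * 1) / (t + 1) ^ 2) t :=
        (hasDerivAt_const t (-γ * (1 + ‖x‖ ^ 2) ^ (α / 2))).div h1 hT.ne'
      have h6 : HasDerivAt (fun s : ℝ =>
            κ * (s + 1) ^ (-β) * Real.exp (-γ * (1 + ‖x‖ ^ 2) ^ (α / 2) / (s + 1)))
          (κ * (1 * -β * (t + 1) ^ (-β - 1))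
              * Real.exp (-γ * (1 + ‖x‖ ^ 2) ^ (α / 2) / (t + 1))
            + κ * (t + 1) ^ (-β) *
              (Real.exp (-γ * (1 + ‖x‖ ^ 2) ^ (α / 2) / (t + 1))
                * ((0 * (t + 1) - -γ * (1 + ‖x‖ ^ 2) ^ (α / 2) * 1) / (t + 1) ^ 2))) t :=
        (h2.const_mul κ).mul h3.exp
      rw [show (fun s => u s x) = fun s : ℝ =>
          κ * (s + 1) ^ (-β) * Real.exp (-γ * (1 + ‖x‖ ^ 2) ^ (α / 2) / (s + 1))
          from funext fun s => hu s x]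
      rw [h6.deriv]
      rw [show (-β - 1 : ℝ) = -β + (-1) from by ring, Real.rpow_add hT, Real.rpow_neg_one]
      ring
    -- space part
    have hInt : ∀ i : Fin n,
        (fun y : Xn n => (1 + ‖y‖ ^ 2) ^ ((2 - α) / 2)
            * pX (fun z : Xn n =>
                κ * (t + 1) ^ (-β) * Real.exp (-γ / (t + 1) * (1 + ‖z‖ ^ 2) ^ (α / 2))) i y)
        = fun y : Xn n => (κ * (t + 1) ^ (-β) * (-γ / (t + 1)) * α)
            * (y i * Real.exp (-γ / (t + 1) * (1 + ‖y‖ ^ 2) ^ (α / 2))) := by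
      intro i
      funext y
      rw [pX_AE (κ * (t + 1) ^ (-β)) (α / 2) (-γ / (t + 1)) y i]
      have hcomb : ((1:ℝ) + ‖y‖ ^ 2) ^ ((2 - α) / 2) * (1 + ‖y‖ ^ 2) ^ (α / 2 - 1) = 1 := by
        rw [← Real.rpow_add (N_pos y), show (2 - α) / 2 + (α / 2 - 1) = 0 from by ring,
          Real.rpow_zero]
      linear_combination (κ * (t + 1) ^ (-β) *
        Real.exp (-γ / (t + 1) * (1 + ‖y‖ ^ 2) ^ (α / 2)) * (-γ / (t + 1)) * α * y i) * hcomb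
    have hL : Lop α (u t) x
        = κ * (t + 1) ^ (-β) * Real.exp (-γ * (1 + ‖x‖ ^ 2) ^ (α / 2) / (t + 1))
            * (-(γ * α * n) / (t + 1))
          + κ * (t + 1) ^ (-β) * Real.exp (-γ * (1 + ‖x‖ ^ 2) ^ (α / 2) / (t + 1))
            * (γ ^ 2 * α ^ 2 * ‖x‖ ^ 2 * (1 + ‖x‖ ^ 2) ^ (α / 2 - 1) / (t + 1) ^ 2) := by
      rw [hw]
      unfold Lop
      simp only [hInt, fderiv_term]
      rw [Finset.sum_add_distrib, Finset.sum_const, Finset.card_univ, Fintype.card_fin,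
        ← Finset.mul_sum, ← Finset.mul_sum, sum_sq]
      simp only [nsmul_eq_mul]
      rw [show -γ * (1 + ‖x‖ ^ 2) ^ (α / 2) / (t + 1)
        = -γ / (t + 1) * (1 + ‖x‖ ^ 2) ^ (α / 2) from by ring]
      field_simp
    -- bound on u^q
    have hupos : 0 < κ * (t + 1) ^ (-β)
        * Real.exp (-γ * (1 + ‖x‖ ^ 2) ^ (α / 2) / (t + 1)) := by positivity
    have hq' : (κ * (t + 1) ^ (-β) * Real.exp (-γ * (1 + ‖x‖ ^ 2) ^ (α / 2) / (t + 1))) ^ q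
        ≤ (κ * (t + 1) ^ (-β) * Real.exp (-γ * (1 + ‖x‖ ^ 2) ^ (α / 2) / (t + 1)))
            * ((α * n * γ - β) / (t + 1)) := by
      have he1 : Real.exp (-γ * (1 + ‖x‖ ^ 2) ^ (α / 2) / (t + 1)) ≤ 1 := by
        rw [Real.exp_le_one_iff, neg_mul, neg_div, neg_nonpos]
        positivity
      have hUle : κ * (t + 1) ^ (-β) * Real.exp (-γ * (1 + ‖x‖ ^ 2) ^ (α / 2) / (t + 1))
          ≤ κ * (t + 1) ^ (-β) := by
        nlinarith [Real.rpow_pos_of_pos hT (-β), Real.exp_pos (-γ * (1 + ‖x‖ ^ 2) ^ (α / 2) / (t + 1))]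
      have hq2 : (κ * (t + 1) ^ (-β) * Real.exp (-γ * (1 + ‖x‖ ^ 2) ^ (α / 2) / (t + 1))) ^ (q - 1)
          ≤ κ ^ (q - 1) / (t + 1) := by
        calc (κ * (t + 1) ^ (-β) * Real.exp (-γ * (1 + ‖x‖ ^ 2) ^ (α / 2) / (t + 1))) ^ (q - 1)
            ≤ (κ * (t + 1) ^ (-β)) ^ (q - 1) := Real.rpow_le_rpow hupos.le hUle hq1.le
          _ = κ ^ (q - 1) * ((t + 1) ^ (-β)) ^ (q - 1) :=
              Real.mul_rpow hκ1.le (Real.rpow_pos_of_pos hT _).le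
          _ = κ ^ (q - 1) * (t + 1) ^ (-β * (q - 1)) := by rw [← Real.rpow_mul hT.le]
          _ = κ ^ (q - 1) * (t + 1) ^ (-1 : ℝ) := by
              rw [show -β * (q - 1) = -1 from by rw [hβ]; field_simp]
          _ = κ ^ (q - 1) / (t + 1) := by rw [Real.rpow_neg_one]; ring
      calc (κ * (t + 1) ^ (-β) * Real.exp (-γ * (1 + ‖x‖ ^ 2) ^ (α / 2) / (t + 1))) ^ q
          = (κ * (t + 1) ^ (-β) * Real.exp (-γ * (1 + ‖x‖ ^ 2) ^ (α / 2) / (t + 1)))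
              * (κ * (t + 1) ^ (-β) * Real.exp (-γ * (1 + ‖x‖ ^ 2) ^ (α / 2) / (t + 1))) ^ (q - 1)
            := by
              rw [← Real.rpow_one_add' hupos.le (by intro h; simp at h; linarith : (1:ℝ) + (q-1) ≠ 0)]
              congr 1
              ring
        _ ≤ (κ * (t + 1) ^ (-β) * Real.exp (-γ * (1 + ‖x‖ ^ 2) ^ (α / 2) / (t + 1)))
              * (κ ^ (q - 1) / (t + 1)) := by
            exact mul_le_mul_of_nonneg_left hq2 hupos.le
        _ ≤ _ := by
            apply mul_le_mul_of_nonneg_left _ hupos.le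
            gcongr
    -- finish
    rw [ge_iff_le, hD, hL, hu t x]
    have hNm : (0:ℝ) < (1 + ‖x‖ ^ 2) ^ (α / 2 - 1) := Real.rpow_pos_of_pos (N_pos x) _
    have hP_eq : ((1:ℝ) + ‖x‖ ^ 2) * (1 + ‖x‖ ^ 2) ^ (α / 2 - 1) = (1 + ‖x‖ ^ 2) ^ (α / 2) := by
      have h := Real.rpow_add (N_pos x) 1 (α / 2 - 1)
      rw [Real.rpow_one] at h
      rw [← h]
      congr 1
      ring
    have h1 : γ ^ 2 * α ^ 2 * ‖x‖ ^ 2 * (1 + ‖x‖ ^ 2) ^ (α / 2 - 1)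
        ≤ γ * (1 + ‖x‖ ^ 2) ^ (α / 2) := by
      rw [← hP_eq]
      exact ineq_aux γ (α ^ 2) (‖x‖ ^ 2) ((1 + ‖x‖ ^ 2) ^ (α / 2 - 1)) hγ0 hγα2 hNm (sq_nonneg _)
    have h2 : κ * (t + 1) ^ (-β) * Real.exp (-γ * (1 + ‖x‖ ^ 2) ^ (α / 2) / (t + 1))
          * (γ ^ 2 * α ^ 2 * ‖x‖ ^ 2 * (1 + ‖x‖ ^ 2) ^ (α / 2 - 1) / (t + 1) ^ 2)
        ≤ κ * (t + 1) ^ (-β) * Real.exp (-γ * (1 + ‖x‖ ^ 2) ^ (α / 2) / (t + 1))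
          * (γ * (1 + ‖x‖ ^ 2) ^ (α / 2) / (t + 1) ^ 2) :=
      mul_le_mul_of_nonneg_left ((div_le_div_iff_of_pos_right (by positivity)).mpr h1) hupos.le
    have hid : κ * (t + 1) ^ (-β) * Real.exp (-γ * (1 + ‖x‖ ^ 2) ^ (α / 2) / (t + 1))
          * (-β / (t + 1) + γ * (1 + ‖x‖ ^ 2) ^ (α / 2) / (t + 1) ^ 2)
        = κ * (t + 1) ^ (-β) * Real.exp (-γ * (1 + ‖x‖ ^ 2) ^ (α / 2) / (t + 1))
            * (-(γ * α * n) / (t + 1))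
          + κ * (t + 1) ^ (-β) * Real.exp (-γ * (1 + ‖x‖ ^ 2) ^ (α / 2) / (t + 1))
            * (γ * (1 + ‖x‖ ^ 2) ^ (α / 2) / (t + 1) ^ 2)
          + κ * (t + 1) ^ (-β) * Real.exp (-γ * (1 + ‖x‖ ^ 2) ^ (α / 2) / (t + 1))
            * ((α * n * γ - β) / (t + 1)) := by
      field_simp
      ring
    linarith [hq', h2]
end
end

section
/- Let n ≥ 1, α > 0 and q > 1 + α/n. Then the conclusion of the Liouville comparison principle fails for this range of exponents: there exist coefficients a_{ij}(t,x) = (1+|x|²)^{(2−α)/2} δ_{ij} on S = (0,∞) × ℝⁿ which are symmetric, locally bounded, with non-negative quadratic form and satisfying 𝒜(R) ≤ c R^{2−α} for all R > 1 and some c > 0, and there exists a smooth positive function u on S such that u satisfies ∂u/∂t ≥ Lu + u^q pointwise on S, v := −u satisfies ∂v/∂t ≤ Lv + |v|^{q−1}v pointwise on S, and hence (u,v) is a non-trivial entire classical solution with u > v of the inequality u_t − Lu − |u|^{q−1}u ≥ v_t − Lv − |v|^{q−1}v. -/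
open MeasureTheory Real

noncomputable section

/-- Points of the half-space `S = (0,∞) × ℝⁿ`. -/
abbrev Pt (n : ℕ) : Type := ℝ × Xn n

/-- The half-space `S = (0,∞) × ℝⁿ`. -/
def halfSpace (n : ℕ) : Set (Pt n) := {p | 0 < p.1}

/-- The odd power function `x ↦ |x|^{q-1} x`. -/
noncomputable def oddPow (q x : ℝ) : ℝ := |x| ^ (q - 1) * x

/-- Partial derivative in the time variable (for classical solutions). -/
noncomputable def timeDeriv {n : ℕ} (w : Pt n → ℝ) (p : Pt n) : ℝ :=
  deriv (fun s => w (s, p.2)) p.1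

/-- The divergence-form operator
`Lw = Σ_{i,j} ∂/∂x_i (a_{ij}(t,x) ∂w/∂x_j)` evaluated classically at `p`. -/
noncomputable def Ldiv {n : ℕ} (a : Fin n → Fin n → Pt n → ℝ)
    (w : Pt n → ℝ) (p : Pt n) : ℝ :=
  ∑ i, fderiv ℝ
    (fun y => ∑ j, a i j (p.1, y) *
      fderiv ℝ (fun z => w (p.1, z)) y (EuclideanSpace.single j 1))
    p.2 (EuclideanSpace.single i 1)

/-! ### Auxiliary constructions for the sharpness example -/

/-- The weight coefficients `a_{ij}(t,x) = (1+|x|²)^{(2-α)/2} δ_{ij}`. -/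
noncomputable def acoefX (n : ℕ) (α : ℝ) : Fin n → Fin n → Pt n → ℝ :=
  fun i j p => if i = j then (1 + ‖p.2‖ ^ 2) ^ ((2 - α) / 2) else 0

/-- The explicit self-similar supersolution
`u(t,x) = ε t^{-a} exp(-(1+|x|²)^{α/2}/(kt))`. -/
noncomputable def usolX (n : ℕ) (α a k ε : ℝ) : Pt n → ℝ :=
  fun p => ε * p.1 ^ (-a) * Real.exp (-(1 + ‖p.2‖ ^ 2) ^ (α/2) / (k * p.1))

lemma hasFDerivAt_spatialX (n : ℕ) (α C kk : ℝ) (y : Xn n) :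
    HasFDerivAt (fun z : Xn n => C * Real.exp (-(1 + ‖z‖ ^ 2) ^ (α/2) / kk))
      ((C * Real.exp (-(1 + ‖y‖ ^ 2) ^ (α/2) / kk) * (-(α/kk) * (1 + ‖y‖ ^ 2) ^ (α/2 - 1))) •
        (innerSL ℝ y)) y := by
  have pos : (0:ℝ) < 1 + ‖y‖ ^ 2 := by positivity
  have h1 : HasFDerivAt (fun z : Xn n => 1 + ‖z‖ ^ 2) ((2:ℕ) • (innerSL ℝ y)) y :=
    ((hasStrictFDerivAt_norm_sq y).hasFDerivAt).const_add 1
  have h2 := (Real.hasDerivAt_rpow_const (p := α/2) (Or.inl pos.ne')).comp_hasFDerivAt y h1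
  have h3 := (h2.neg).mul_const kk⁻¹
  have h4 := (Real.hasDerivAt_exp (-(1 + ‖y‖ ^ 2) ^ (α/2) * kk⁻¹)).comp_hasFDerivAt y h3
  have h5 := h4.const_mul C
  have hfun : (fun z : Xn n => C * Real.exp (-(1 + ‖z‖ ^ 2) ^ (α/2) / kk))
      = (fun z : Xn n => C * Real.exp (-(1 + ‖z‖ ^ 2) ^ (α/2) * kk⁻¹)) := by
    funext z; rw [div_eq_mul_inv]
  rw [hfun]
  refine h5.congr_fderiv ?_
  ext z
  simp [smul_smul, innerSL_apply_apply]
  simp only [neg_div, div_eq_mul_inv]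
  ring

lemma sum_coord_sq (n : ℕ) (x : Xn n) : ∑ i, x i ^ 2 = ‖x‖ ^ 2 := by
  rw [EuclideanSpace.norm_eq, Real.sq_sqrt (by positivity)]
  simp [Real.norm_eq_abs, sq_abs]

lemma Ldiv_usolX (n : ℕ) (α a k ε t : ℝ) (x : Xn n) :
    Ldiv (acoefX n α) (usolX n α a k ε) (t, x)
      = usolX n α a k ε (t, x) *
        ((α/(k*t)) * ((α/(k*t)) * ((1 + ‖x‖ ^ 2) ^ (α/2 - 1) * ‖x‖ ^ 2)) - n * (α/(k*t))) := by
  set kk := k * t with hkk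
  set C := ε * t ^ (-a) with hC
  have hinner : ∀ i : Fin n, (fun y : Xn n => ∑ j, acoefX n α i j (t, y) *
        fderiv ℝ (fun z => usolX n α a k ε (t, z)) y (EuclideanSpace.single j 1))
      = fun y : Xn n => (-(α/kk)) * ((C * Real.exp (-(1 + ‖y‖ ^ 2) ^ (α/2) / kk)) * y i) := by
    intro i
    funext y
    have pos : (0:ℝ) < 1 + ‖y‖ ^ 2 := by positivity
    have hD : fderiv ℝ (fun z => usolX n α a k ε (t, z)) y
        = (C * Real.exp (-(1 + ‖y‖ ^ 2) ^ (α/2) / kk) * (-(α/kk) * (1 + ‖y‖ ^ 2) ^ (α/2 - 1))) •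
          (innerSL ℝ y) := (hasFDerivAt_spatialX n α C kk y).fderiv
    rw [hD]
    simp only [acoefX, ite_mul, zero_mul, Finset.sum_ite_eq, Finset.mem_univ, if_true,
      ContinuousLinearMap.smul_apply, innerSL_apply_apply, EuclideanSpace.inner_single_right,
      smul_eq_mul, starRingEnd_apply, star_trivial]
    have hcancel : (1 + ‖y‖ ^ 2) ^ ((2 - α)/2) * (1 + ‖y‖ ^ 2) ^ (α/2 - 1) = 1 := by
      rw [← Real.rpow_add pos, show (2 - α)/2 + (α/2 - 1) = 0 by ring, Real.rpow_zero]
    linear_combination (C * Real.exp (-(1 + ‖y‖ ^ 2) ^ (α/2) / kk) * (-(α/kk)) * y i) * hcancel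
  have houter : ∀ i : Fin n,
      fderiv ℝ (fun y : Xn n => (-(α/kk)) * ((C * Real.exp (-(1 + ‖y‖ ^ 2) ^ (α/2) / kk)) * y i))
        x (EuclideanSpace.single i 1)
      = (-(α/kk)) * (C * Real.exp (-(1 + ‖x‖ ^ 2) ^ (α/2) / kk))
        + ((α/kk) * ((α/kk) * ((1 + ‖x‖ ^ 2) ^ (α/2 - 1)
            * (C * Real.exp (-(1 + ‖x‖ ^ 2) ^ (α/2) / kk))))) * (x i * x i) := by
    intro i
    have hproj : HasFDerivAt (fun y : Xn n => y i) (EuclideanSpace.proj i (𝕜 := ℝ)) x :=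
      (EuclideanSpace.proj i (𝕜 := ℝ)).hasFDerivAt
    have hmul : HasFDerivAt (fun y : Xn n => (-(α/kk)) * ((C * Real.exp (-(1 + ‖y‖ ^ 2) ^ (α/2) / kk)) * y i)) _ x :=
      ((hasFDerivAt_spatialX n α C kk x).mul hproj).const_mul (-(α/kk))
    rw [hmul.fderiv]
    simp only [ContinuousLinearMap.smul_apply, ContinuousLinearMap.add_apply,
      innerSL_apply_apply, EuclideanSpace.inner_single_right, smul_eq_mul,
      starRingEnd_apply, star_trivial, PiLp.proj_apply,
      EuclideanSpace.single_apply, eq_self_iff_true, if_true]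
    ring
  unfold Ldiv
  rw [Finset.sum_congr rfl (fun i _ => by rw [hinner i, houter i])]
  rw [Finset.sum_add_distrib, Finset.sum_const, ← Finset.mul_sum, Finset.card_univ,
    Fintype.card_fin, nsmul_eq_mul]
  have hxx : ∑ i, x i * x i = ‖x‖ ^ 2 := by
    rw [← sum_coord_sq n x]; exact Finset.sum_congr rfl fun i _ => (sq (x i)).symm
  rw [hxx]
  show _ = (ε * t ^ (-a) * Real.exp (-(1 + ‖x‖ ^ 2) ^ (α/2) / (k * t))) * _
  rw [← hkk, ← hC]
  ring

lemma hasDerivAt_timeX (n : ℕ) (α a k ε t : ℝ) (x : Xn n) (ht : 0 < t) (hk : 0 < k) :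
    HasDerivAt (fun s : ℝ => ε * s ^ (-a) * Real.exp (-(1 + ‖x‖ ^ 2) ^ (α/2) / (k * s)))
      (ε * t ^ (-a) * Real.exp (-(1 + ‖x‖ ^ 2) ^ (α/2) / (k * t))
        * (-a / t + (1 + ‖x‖ ^ 2) ^ (α/2) / (k * t ^ 2))) t := by
  have h1 : HasDerivAt (fun s : ℝ => ε * s ^ (-a)) (ε * (-a * t ^ (-a - 1))) t :=
    (Real.hasDerivAt_rpow_const (Or.inl ht.ne')).const_mul ε
  have hd : HasDerivAt (fun s : ℝ => k * s) k t := by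
    simpa using (hasDerivAt_id t).const_mul k
  have h2 : HasDerivAt (fun s : ℝ => -(1 + ‖x‖ ^ 2) ^ (α/2) / (k * s))
      ((0 * (k * t) - (-(1 + ‖x‖ ^ 2) ^ (α/2)) * k) / (k * t) ^ 2) t :=
    (hasDerivAt_const t _).div hd (by positivity)
  have h3 : HasDerivAt (fun s : ℝ => ε * s ^ (-a) * Real.exp (-(1 + ‖x‖ ^ 2) ^ (α/2) / (k * s))) _ t :=
    h1.mul h2.exp
  convert h3 using 1
  rw [Real.rpow_sub ht, Real.rpow_one]
  field_simp
  ring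

set_option maxHeartbeats 1000000 in
/-- sharpness of the Liouville comparison principle for
`q > 1 + α/n`, `α > 0` (Example 2): there exist admissible coefficients
satisfying condition (8) with the given `α`, and a smooth positive `u` on
`S = (0,∞) × ℝⁿ` such that `u` is a classical super-solution, `v := -u` is a
classical sub-solution, and hence `(u,v)` is a non-trivial entire classical
solution with `u > v` of `u_t − Lu − |u|^{q−1}u ≥ v_t − Lv − |v|^{q−1}v`. -/
theorem sharpness_example_alpha_pos
    (n : ℕ) (hn : 1 ≤ n) (α q : ℝ) (hα : 0 < α) (hq : 1 + α / n < q) :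
    ∃ (a : Fin n → Fin n → Pt n → ℝ) (A : Pt n → ℝ) (u : Pt n → ℝ) (c : ℝ),
      -- the coefficients `a_{ij}(t,x) = (1+|x|²)^{(2−α)/2} δ_{ij}`
      (∀ i j, ∀ p : Pt n,
        a i j p = if i = j then (1 + ‖p.2‖ ^ 2) ^ ((2 - α) / 2) else 0) ∧
      -- symmetric
      (∀ i j, ∀ p : Pt n, a i j p = a j i p) ∧
      -- locally bounded
      (∀ i j, ∀ K : Set (Pt n), IsCompact K → ∃ M, ∀ p ∈ K, |a i j p| ≤ M) ∧
      -- non-negative quadratic form, bounded by `A(t,x)|ξ|²`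
      (∀ p : Pt n, ∀ ξ : Xn n,
        0 ≤ ∑ i, ∑ j, a i j p * ξ i * ξ j ∧
        ∑ i, ∑ j, a i j p * ξ i * ξ j ≤ A p * ‖ξ‖ ^ 2) ∧
      -- condition (8): `𝒜(R) ≤ c R^{2−α}` for all `R > 1`
      0 < c ∧
      (∀ R : ℝ, 1 < R → ∀ p : Pt n, 0 < p.1 → R / 2 < ‖p.2‖ → ‖p.2‖ < R →
        A p ≤ c * R ^ (2 - α)) ∧
      -- `u` is smooth and positive on `S`
      ContDiffOn ℝ (⊤ : ℕ∞) u (halfSpace n) ∧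
      (∀ p ∈ halfSpace n, 0 < u p) ∧
      -- `u` satisfies `∂u/∂t ≥ Lu + u^q` pointwise on `S`
      (∀ p ∈ halfSpace n, timeDeriv u p ≥ Ldiv a u p + u p ^ q) ∧
      -- `v := −u` satisfies `∂v/∂t ≤ Lv + |v|^{q−1}v` pointwise on `S`
      (∀ p ∈ halfSpace n,
        timeDeriv (fun r => -u r) p ≤
          Ldiv a (fun r => -u r) p + oddPow q (-u p)) ∧
      -- in particular `u > v := -u`, so the pair is non-trivial
      (∀ p ∈ halfSpace n, -u p < u p) := by
  -- numeric setup
  have hn' : (0:ℝ) < n := by exact_mod_cast Nat.lt_of_lt_of_le Nat.zero_lt_one hn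
  have hq1 : (0:ℝ) < q - 1 := by
    have : 0 < α / n := div_pos hα hn'
    linarith
  have hαn : α < n * (q - 1) := by
    have h := (div_lt_iff₀ hn').mp (by linarith : α / n < q - 1)
    nlinarith
  set a : ℝ := (q - 1)⁻¹ with ha
  set k : ℝ := (α ^ 2 + α * n * (q - 1)) / 2 with hkdef
  have hk2 : α ^ 2 < α * n * (q - 1) := by nlinarith
  have hkpos : 0 < k := by rw [hkdef]; nlinarith [sq_nonneg α]
  have hkα : α ^ 2 ≤ k := by rw [hkdef]; nlinarith
  have hklt : k < α * n * (q - 1) := by rw [hkdef]; nlinarith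
  have hapos : 0 < a := by rw [ha]; positivity
  set d : ℝ := α * n / k - a with hd
  have hdpos : 0 < d := by
    have h1 : (q - 1)⁻¹ * k < (q - 1)⁻¹ * (α * n * (q - 1)) :=
      mul_lt_mul_of_pos_left hklt (inv_pos.mpr hq1)
    have h2 : (q - 1)⁻¹ * (α * n * (q - 1)) = α * n := by field_simp
    rw [hd, ha, sub_pos, lt_div_iff₀ hkpos]
    nlinarith
  set ε : ℝ := min 1 (d ^ (q - 1)⁻¹) with hε
  have hεpos : 0 < ε := lt_min one_pos (Real.rpow_pos_of_pos hdpos _)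
  have hεd : ε ^ (q - 1) ≤ d := by
    calc ε ^ (q - 1) ≤ (d ^ (q - 1)⁻¹) ^ (q - 1) :=
          Real.rpow_le_rpow hεpos.le (min_le_right _ _) hq1.le
      _ = d := by
          rw [← Real.rpow_mul hdpos.le, inv_mul_cancel₀ hq1.ne', Real.rpow_one]
  -- positivity of u
  have upos : ∀ p ∈ halfSpace n, 0 < usolX n α a k ε p := by
    intro p hp
    have hp1 : (0:ℝ) < p.1 := hp
    unfold usolX
    positivity
  -- the key differential inequality for u
  have key : ∀ p ∈ halfSpace n,
      timeDeriv (usolX n α a k ε) p ≥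
        Ldiv (acoefX n α) (usolX n α a k ε) p + usolX n α a k ε p ^ q := by
    rintro ⟨t, x⟩ hp
    have ht : (0:ℝ) < t := hp
    have hbase : (0:ℝ) < 1 + ‖x‖ ^ 2 := by positivity
    have hU : (0:ℝ) < usolX n α a k ε (t, x) := upos (t, x) hp
    have hT : timeDeriv (usolX n α a k ε) (t, x)
        = usolX n α a k ε (t, x) * (-a / t + (1 + ‖x‖ ^ 2) ^ (α/2) / (k * t ^ 2)) :=
      (hasDerivAt_timeX n α a k ε t x ht hkpos).deriv
    have hL := Ldiv_usolX n α a k ε t x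
    set U := usolX n α a k ε (t, x) with hUdef
    rw [ge_iff_le, hT, hL]
    have hw : 0 < α / (k * t) := by positivity
    have hPs : (1 + ‖x‖ ^ 2) ^ (α/2 - 1) * ‖x‖ ^ 2 ≤ (1 + ‖x‖ ^ 2) ^ (α/2) := by
      have hPpos : 0 < (1 + ‖x‖ ^ 2) ^ (α/2 - 1) := Real.rpow_pos_of_pos hbase _
      have h2 := Real.rpow_add_one hbase.ne' (α/2 - 1)
      rw [show α/2 - 1 + 1 = α/2 by ring] at h2
      nlinarith [sq_nonneg ‖x‖]
    have hA1 : (α/(k*t)) * ((α/(k*t)) * ((1 + ‖x‖ ^ 2) ^ (α/2 - 1) * ‖x‖ ^ 2))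
        ≤ (1 + ‖x‖ ^ 2) ^ (α/2) / (k * t ^ 2) := by
      have e1 : (α/(k*t)) * ((α/(k*t)) * (1 + ‖x‖ ^ 2) ^ (α/2))
          = (α ^ 2 / k) * ((1 + ‖x‖ ^ 2) ^ (α/2) / (k * t ^ 2)) := by
        field_simp
      have e2 : α ^ 2 / k ≤ 1 := (div_le_one hkpos).mpr hkα
      have e3 : (0:ℝ) < (1 + ‖x‖ ^ 2) ^ (α/2) / (k * t ^ 2) := by positivity
      calc (α/(k*t)) * ((α/(k*t)) * ((1 + ‖x‖ ^ 2) ^ (α/2 - 1) * ‖x‖ ^ 2))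
          ≤ (α/(k*t)) * ((α/(k*t)) * (1 + ‖x‖ ^ 2) ^ (α/2)) :=
            mul_le_mul_of_nonneg_left (mul_le_mul_of_nonneg_left hPs hw.le) hw.le
        _ = (α ^ 2 / k) * ((1 + ‖x‖ ^ 2) ^ (α/2) / (k * t ^ 2)) := e1
        _ ≤ 1 * ((1 + ‖x‖ ^ 2) ^ (α/2) / (k * t ^ 2)) :=
            mul_le_mul_of_nonneg_right e2 e3.le
        _ = (1 + ‖x‖ ^ 2) ^ (α/2) / (k * t ^ 2) := one_mul _
    have hUq : U ^ q ≤ d * t⁻¹ * U := by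
      have h1 : U ^ q = U ^ (q - 1) * U := by
        rw [← Real.rpow_add_one hU.ne' (q - 1), show q - 1 + 1 = q by ring]
      have h2 : U ^ (q - 1) = ε ^ (q - 1) * (t ^ (-a)) ^ (q - 1)
          * (Real.exp (-(1 + ‖x‖ ^ 2) ^ (α/2) / (k * t))) ^ (q - 1) := by
        rw [hUdef]
        show (ε * t ^ (-a) * Real.exp (-(1 + ‖x‖ ^ 2) ^ (α/2) / (k * t))) ^ (q-1) = _
        rw [Real.mul_rpow (by positivity) (Real.exp_pos _).le,
          Real.mul_rpow hεpos.le (Real.rpow_pos_of_pos ht _).le]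
      have h3 : (t ^ (-a)) ^ (q - 1) = t⁻¹ := by
        rw [← Real.rpow_mul ht.le, ha, show -(q-1)⁻¹ * (q - 1) = -1 by field_simp,
          Real.rpow_neg_one]
      have h4 : (Real.exp (-(1 + ‖x‖ ^ 2) ^ (α/2) / (k * t))) ^ (q - 1) ≤ 1 := by
        apply Real.rpow_le_one (Real.exp_pos _).le _ hq1.le
        rw [Real.exp_le_one_iff, neg_div]
        exact neg_nonpos.mpr (by positivity)
      have h5 : ε ^ (q - 1) * (Real.exp (-(1 + ‖x‖ ^ 2) ^ (α/2) / (k * t))) ^ (q - 1) ≤ d :=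
        le_trans (mul_le_mul hεd h4 (by positivity) hdpos.le) (by linarith)
      calc U ^ q = (ε ^ (q - 1) * (Real.exp (-(1 + ‖x‖ ^ 2) ^ (α/2) / (k * t))) ^ (q - 1))
            * (t⁻¹ * U) := by rw [h1, h2, h3]; ring
        _ ≤ d * (t⁻¹ * U) :=
            mul_le_mul_of_nonneg_right h5 (by positivity)
        _ = d * t⁻¹ * U := by ring
    have h6 : U * (-a / t + n * (α / (k * t))) = d * t⁻¹ * U := by
      have e : -a / t + n * (α / (k * t)) = d * t⁻¹ := by
        rw [hd]; field_simp; ring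
      rw [e]; ring
    have hWU := mul_le_mul_of_nonneg_left hA1 hU.le
    calc U * ((α/(k*t)) * ((α/(k*t)) * ((1 + ‖x‖ ^ 2) ^ (α/2 - 1) * ‖x‖ ^ 2)) - n * (α/(k*t)))
          + U ^ q
        ≤ U * ((α/(k*t)) * ((α/(k*t)) * ((1 + ‖x‖ ^ 2) ^ (α/2 - 1) * ‖x‖ ^ 2)) - n * (α/(k*t)))
          + U * (-a / t + n * (α / (k * t))) := by
          rw [h6]; linarith [hUq]
      _ = U * ((α/(k*t)) * ((α/(k*t)) * ((1 + ‖x‖ ^ 2) ^ (α/2 - 1) * ‖x‖ ^ 2))) + U * (-a / t) := by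
          ring
      _ ≤ U * ((1 + ‖x‖ ^ 2) ^ (α/2) / (k * t ^ 2)) + U * (-a / t) := by linarith
      _ = U * (-a / t + (1 + ‖x‖ ^ 2) ^ (α/2) / (k * t ^ 2)) := by ring
  refine ⟨acoefX n α, fun p => (1 + ‖p.2‖ ^ 2) ^ ((2 - α) / 2), usolX n α a k ε,
    2 ^ ((2 - α) / 2) + 2 ^ (α - 2), fun i j p => rfl, ?_, ?_, ?_, ?_, ?_, ?_, ?_, ?_, ?_, ?_⟩
  · -- symmetric
    intro i j p
    unfold acoefX
    rcases eq_or_ne i j with h | h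
    · subst h; rfl
    · rw [if_neg h, if_neg h.symm]
  · -- locally bounded
    intro i j K hK
    rcases eq_or_ne i j with h | h
    · subst h
      have hc : ContinuousOn (fun p : Pt n => (1 + ‖p.2‖ ^ 2) ^ ((2 - α) / 2)) K := by
        apply Continuous.continuousOn
        apply Continuous.rpow_const
        · exact continuous_const.add ((continuous_snd.norm).pow 2)
        · intro x; left; positivity
      obtain ⟨M, hM⟩ := hK.exists_bound_of_continuousOn hc
      exact ⟨M, fun p hp => by simpa [acoefX, Real.norm_eq_abs] using hM p hp⟩
    · exact ⟨0, fun p hp => by simp [acoefX, h]⟩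
  · -- quadratic form
    intro p ξ
    have hsum : ∑ i, ∑ j, acoefX n α i j p * ξ i * ξ j
        = (1 + ‖p.2‖ ^ 2) ^ ((2 - α) / 2) * ‖ξ‖ ^ 2 := by
      rw [← sum_coord_sq n ξ, Finset.mul_sum]
      refine Finset.sum_congr rfl fun i _ => ?_
      simp only [acoefX, ite_mul, zero_mul, Finset.sum_ite_eq, Finset.mem_univ, if_true]
      ring
    constructor
    · rw [hsum]; positivity
    · rw [hsum]
  · -- c > 0
    positivity
  · -- condition (8)
    intro R hR p hp h1 h2
    have hRpos : (0:ℝ) < R := lt_trans one_pos hR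
    have hr : (0:ℝ) ≤ ‖p.2‖ := norm_nonneg _
    have hbase : (0:ℝ) < 1 + ‖p.2‖ ^ 2 := by positivity
    have hc2 : (0:ℝ) < 2 ^ ((2 - α) / 2) := by positivity
    have hc3 : (0:ℝ) < 2 ^ (α - 2) := by positivity
    have hRa : (0:ℝ) < R ^ (2 - α) := Real.rpow_pos_of_pos hRpos _
    rcases le_or_gt α 2 with hα2 | hα2
    · have he : (0:ℝ) ≤ (2 - α) / 2 := by linarith
      have hb : 1 + ‖p.2‖ ^ 2 ≤ 2 * R ^ 2 := by nlinarith
      calc (1 + ‖p.2‖ ^ 2) ^ ((2 - α) / 2) ≤ (2 * R ^ 2) ^ ((2 - α) / 2) :=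
            Real.rpow_le_rpow hbase.le hb he
        _ = 2 ^ ((2 - α) / 2) * R ^ (2 - α) := by
            rw [Real.mul_rpow (by norm_num) (by positivity), ← Real.rpow_natCast R 2,
              ← Real.rpow_mul hRpos.le,
              show ((2:ℕ):ℝ) * ((2 - α) / 2) = 2 - α by push_cast; ring]
        _ ≤ (2 ^ ((2 - α) / 2) + 2 ^ (α - 2)) * R ^ (2 - α) := by nlinarith
    · have he : (2 - α) / 2 ≤ 0 := by linarith
      have hb : (R / 2) ^ 2 ≤ 1 + ‖p.2‖ ^ 2 := by nlinarith
      have hQ : (0:ℝ) < (R / 2) ^ 2 := by positivity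
      calc (1 + ‖p.2‖ ^ 2) ^ ((2 - α) / 2) ≤ ((R / 2) ^ 2) ^ ((2 - α) / 2) :=
            Real.rpow_le_rpow_of_nonpos hQ hb he
        _ = 2 ^ (α - 2) * R ^ (2 - α) := by
            rw [← Real.rpow_natCast (R / 2) 2, ← Real.rpow_mul (by positivity),
              show ((2:ℕ):ℝ) * ((2 - α) / 2) = 2 - α by push_cast; ring,
              Real.div_rpow hRpos.le (by norm_num : (0:ℝ) ≤ 2), div_eq_mul_inv,
              ← Real.rpow_neg (by norm_num : (0:ℝ) ≤ 2), show -(2 - α) = α - 2 by ring]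
            ring
        _ ≤ (2 ^ ((2 - α) / 2) + 2 ^ (α - 2)) * R ^ (2 - α) := by nlinarith
  · -- smoothness
    intro p hp
    have hp1 : (0:ℝ) < p.1 := hp
    have hb : (0:ℝ) < 1 + ‖p.2‖ ^ 2 := by positivity
    have h1 : ContDiffAt ℝ (⊤ : ℕ∞) (fun p : Pt n => p.1 ^ (-a)) p :=
      (Real.contDiffAt_rpow_const_of_ne hp1.ne').comp p contDiffAt_fst
    have h2 : ContDiffAt ℝ (⊤ : ℕ∞) (fun p : Pt n => (1 + ‖p.2‖ ^ 2) ^ (α/2)) p :=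
      (Real.contDiffAt_rpow_const_of_ne hb.ne').comp p
        (contDiffAt_const.add (contDiffAt_snd.norm_sq ℝ))
    have h3 : ContDiffAt ℝ (⊤ : ℕ∞) (fun p : Pt n => -(1 + ‖p.2‖ ^ 2) ^ (α/2) / (k * p.1)) p :=
      (h2.neg).div (contDiffAt_const.mul contDiffAt_fst) (by positivity)
    have h4 : ContDiffAt ℝ (⊤ : ℕ∞)
        (fun p : Pt n => Real.exp (-(1 + ‖p.2‖ ^ 2) ^ (α/2) / (k * p.1))) p :=
      Real.contDiff_exp.contDiffAt.comp p h3
    exact ((contDiffAt_const.mul h1).mul h4).contDiffWithinAt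
  · -- positivity
    exact upos
  · -- supersolution
    exact key
  · -- subsolution for v = -u
    intro p hp
    have h0 := key p hp
    have hu := upos p hp
    have hT : timeDeriv (fun r => -usolX n α a k ε r) p
        = -timeDeriv (usolX n α a k ε) p := deriv.neg
    have hLneg : Ldiv (acoefX n α) (fun r => -usolX n α a k ε r) p
        = -Ldiv (acoefX n α) (usolX n α a k ε) p := by
      unfold Ldiv
      have hin : ∀ i : Fin n, (fun y : Xn n => ∑ j, acoefX n α i j (p.1, y) *
            fderiv ℝ (fun z => -usolX n α a k ε (p.1, z)) y (EuclideanSpace.single j 1))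
          = fun y : Xn n => -(∑ j, acoefX n α i j (p.1, y) *
            fderiv ℝ (fun z => usolX n α a k ε (p.1, z)) y (EuclideanSpace.single j 1)) := by
        intro i; funext y
        rw [show (fun z : Xn n => -usolX n α a k ε (p.1, z))
            = fun z : Xn n => -((fun z : Xn n => usolX n α a k ε (p.1, z)) z) from rfl,
          fderiv_fun_neg]
        simp [mul_neg, ContinuousLinearMap.neg_apply, Finset.sum_neg_distrib]
      rw [Finset.sum_congr rfl
        (fun i _ => by rw [hin i, fderiv_fun_neg, ContinuousLinearMap.neg_apply])]
      exact Finset.sum_neg_distrib _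
    have hodd : oddPow q (-usolX n α a k ε p) = -(usolX n α a k ε p ^ q) := by
      unfold oddPow
      rw [abs_neg, abs_of_pos hu, mul_neg, ← Real.rpow_add_one hu.ne' (q - 1),
        show q - 1 + 1 = q by ring]
    rw [hT, hLneg, hodd]
    linarith
  · -- non-triviality
    intro p hp
    have := upos p hp
    linarith
end
end

section
/- Let n ≥ 1, α ≤ 0, and let q satisfy q > 1 and q > 1 + α/n. Then there exist coefficients a_{ij} on S = (0,∞) × ℝⁿ which are symmetric, locally bounded, with non-negative quadratic form, satisfying 𝒜(R) ≤ c R^{2−α} for all R > 1 and some c > 0, and a smooth positive function u on S such that u satisfies ∂u/∂t ≥ Lu + u^q pointwise on S and v := −u satisfies ∂v/∂t ≤ Lv + |v|^{q−1}v pointwise on S. Concretely, one may take any α̂ > 0 with q > 1 + α̂/n, a_{ij}(t,x) = (1+|x|²)^{(2−α̂)/2} δ_{ij}, and u(t,x) = κ (t+1)^{−1/(q−1)} exp(−γ (1+|x|²)^{α̂/2}/(t+1)) with 1/(α̂ n (q−1)) < γ ≤ 1/α̂² and 0 < κ ≤ (α̂ n (γ − 1/(α̂ n (q−1))))^{1/(q−1)}.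 -/
open MeasureTheory Real

noncomputable section

/-! ### Auxiliary lemmas -/

lemma hasDerivAt_g' (b γ κ β t : ℝ) {r : ℝ} (hr : (0:ℝ) ≤ r) :
    HasDerivAt (fun r : ℝ => κ * (t+1) ^ (-β) * Real.exp (-γ * (1+r) ^ b / (t+1)))
      (κ * (t+1) ^ (-β) * Real.exp (-γ * (1+r) ^ b / (t+1)) *
        (-γ * (b * (1+r) ^ (b-1)) / (t+1))) r := by
  have h1r : (1 : ℝ) + r ≠ 0 := by positivity
  have h1 : HasDerivAt (fun r : ℝ => 1 + r) 1 r := (hasDerivAt_id r).const_add 1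
  have h2 : HasDerivAt (fun r : ℝ => (1+r) ^ b) (b * (1+r) ^ (b-1) * 1) r :=
    (Real.hasDerivAt_rpow_const (Or.inl h1r)).comp r h1
  have h3 : HasDerivAt (fun r : ℝ => -γ * (1+r) ^ b / (t+1))
      (-γ * (b * (1+r) ^ (b-1) * 1) / (t+1)) r := (h2.const_mul (-γ)).div_const (t+1)
  have h4 := (h3.exp).const_mul (κ * (t+1) ^ (-β))
  refine h4.congr_deriv ?_
  ring

lemma hasFDerivAt_U' (n : ℕ) (b γ κ β t : ℝ) (y : Xn n) :
    HasFDerivAt (fun z : Xn n => κ * (t+1) ^ (-β) * Real.exp (-γ * (1+‖z‖^2) ^ b / (t+1)))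
      ((κ * (t+1) ^ (-β) * Real.exp (-γ * (1+‖y‖^2) ^ b / (t+1)) *
        (-γ * (b * (1+‖y‖^2) ^ (b-1)) / (t+1))) • (2 • (innerSL ℝ y))) y := by
  have hg := hasDerivAt_g' b γ κ β t (r := ‖y‖^2) (by positivity)
  have hN : HasFDerivAt (fun z : Xn n => ‖z‖^2) (2 • (innerSL ℝ y)) y :=
    (hasStrictFDerivAt_norm_sq y).hasFDerivAt
  exact (hg.comp_hasFDerivAt (f := fun z : Xn n => ‖z‖^2) y hN :)

lemma fderiv_U_apply' (n : ℕ) (b γ κ β t : ℝ) (y : Xn n) (j : Fin n) :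
    fderiv ℝ (fun z : Xn n => κ * (t+1) ^ (-β) * Real.exp (-γ * (1+‖z‖^2) ^ b / (t+1))) y
      (EuclideanSpace.single j 1)
      = κ * (t+1) ^ (-β) * Real.exp (-γ * (1+‖y‖^2) ^ b / (t+1)) *
        (-γ * (b * (1+‖y‖^2) ^ (b-1)) / (t+1)) * (2 * y j) := by
  rw [(hasFDerivAt_U' n b γ κ β t y).fderiv]
  simp only [ContinuousLinearMap.smul_apply, ContinuousLinearMap.coe_smul', Pi.smul_apply,
    innerSL_apply_apply, smul_eq_mul]
  rw [real_inner_comm, EuclideanSpace.inner_single_left]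
  simp only [map_one]
  ring

lemma sum_self_mul' (n : ℕ) (x : Xn n) : ∑ i, x i * x i = ‖x‖^2 := by
  rw [← real_inner_self_eq_norm_sq]
  simp only [PiLp.inner_apply, RCLike.inner_apply, conj_trivial]

lemma Ldiv_eq' (n : ℕ) (ah γ κ β t : ℝ) (ht : t + 1 ≠ 0) (x : Xn n) :
    Ldiv (fun i j p => if i = j then (1+‖p.2‖^2) ^ ((2-ah)/2) else 0)
      (fun p : Pt n => κ * (p.1+1) ^ (-β) * Real.exp (-γ * (1+‖p.2‖^2) ^ (ah/2) / (p.1+1)))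
      (t, x)
    = (κ * (t+1) ^ (-β) * Real.exp (-γ * (1+‖x‖^2) ^ (ah/2) / (t+1))) *
        (γ^2 * ah^2 * (1+‖x‖^2) ^ (ah/2-1) * ‖x‖^2 / (t+1)^2 - γ * ah * n / (t+1)) := by
  set U : Xn n → ℝ := fun z => κ * (t+1) ^ (-β) * Real.exp (-γ * (1+‖z‖^2) ^ (ah/2) / (t+1))
    with hUdef
  have hfun : ∀ i : Fin n,
      (fun y : Xn n => ∑ j, (if i = j then (1+‖y‖^2) ^ ((2-ah)/2) else 0) *
        fderiv ℝ (fun z : Xn n => κ * (t+1) ^ (-β) *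
          Real.exp (-γ * (1+‖z‖^2) ^ (ah/2) / (t+1))) y (EuclideanSpace.single j 1))
      = fun y : Xn n => (U y * (-γ * ah / (t+1))) * y i := by
    intro i; funext y
    have hpos : (0:ℝ) < 1 + ‖y‖^2 := by positivity
    have key : (1+‖y‖^2:ℝ) ^ ((2-ah)/2) * (1+‖y‖^2) ^ (ah/2-1) = 1 := by
      rw [← Real.rpow_add hpos]
      have : (2-ah)/2 + (ah/2-1) = 0 := by ring
      rw [this, Real.rpow_zero]
    simp only [fderiv_U_apply' n (ah/2) γ κ β t y, ite_mul, zero_mul,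
      Finset.sum_ite_eq, Finset.mem_univ, if_true, hUdef]
    linear_combination (-(κ * (t+1) ^ (-β) *
      Real.exp (-γ * (1+‖y‖^2) ^ (ah/2) / (t+1)) * γ * ah * (y i)) / (t+1)) * key
  have hproj : ∀ i : Fin n, HasFDerivAt (fun y : Xn n => y i)
      (EuclideanSpace.proj i : Xn n →L[ℝ] ℝ) x :=
    fun i => (EuclideanSpace.proj i : Xn n →L[ℝ] ℝ).hasFDerivAt
  have houter : ∀ i : Fin n,
      fderiv ℝ (fun y : Xn n => (U y * (-γ * ah / (t+1))) * y i) x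
        (EuclideanSpace.single i 1)
      = (U x * (-γ * (ah/2 * (1+‖x‖^2) ^ (ah/2-1)) / (t+1))) * (2 * x i)
          * (-γ * ah / (t+1)) * x i + U x * (-γ * ah / (t+1)) := by
    intro i
    have hU := (hasFDerivAt_U' n (ah/2) γ κ β t x).mul_const (-γ * ah / (t+1))
    have hp := (hU.mul (hproj i)).fderiv
    rw [show fderiv ℝ (fun y : Xn n => (U y * (-γ * ah / (t+1))) * y i) x = _ from hp]
    simp only [ContinuousLinearMap.add_apply, ContinuousLinearMap.smul_apply,
      ContinuousLinearMap.coe_smul', Pi.smul_apply, innerSL_apply_apply, smul_eq_mul,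
      PiLp.proj_apply, EuclideanSpace.single_apply]
    rw [real_inner_comm, EuclideanSpace.inner_single_left]
    simp only [map_one, if_true]
    ring
  show (∑ i, fderiv ℝ _ x (EuclideanSpace.single i 1)) = _
  rw [Finset.sum_congr rfl (fun i _ => by rw [hfun i, houter i])]
  rw [Finset.sum_add_distrib, Finset.sum_const, Finset.card_univ, Fintype.card_fin]
  have : ∑ i, (U x * (-γ * (ah/2 * (1+‖x‖^2) ^ (ah/2-1)) / (t+1))) * (2 * x i)
      * (-γ * ah / (t+1)) * x i
      = (U x * (-γ * (ah/2 * (1+‖x‖^2) ^ (ah/2-1)) / (t+1))) * 2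
      * (-γ * ah / (t+1)) * ‖x‖^2 := by
    rw [← sum_self_mul' n x, Finset.mul_sum]
    apply Finset.sum_congr rfl; intro i _; ring
  rw [this]
  simp only [hUdef, div_eq_mul_inv, ← inv_pow]
  ring

lemma hasDerivAt_time' (γ κ β P t : ℝ) (ht : 0 < t + 1) :
    HasDerivAt (fun s : ℝ => κ * (s+1) ^ (-β) * Real.exp (-γ * P / (s+1)))
      (κ * (t+1) ^ (-β) * Real.exp (-γ * P / (t+1)) * (-β/(t+1) + γ * P/(t+1)^2)) t := by
  have h1 : HasDerivAt (fun s : ℝ => s + 1) 1 t := (hasDerivAt_id t).add_const 1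
  have h2 : HasDerivAt (fun s : ℝ => (s+1) ^ (-β)) (-β * (t+1) ^ (-β-1) * 1) t :=
    ((Real.hasDerivAt_rpow_const (p := -β) (Or.inl ht.ne')).comp t h1 :)
  have h3 : HasDerivAt (fun s : ℝ => -γ * P / (s+1))
      ((0 * (t+1) - -γ * P * 1) / (t+1)^2) t :=
    (hasDerivAt_const t (-γ * P)).div h1 ht.ne'
  have h5 := (h2.const_mul κ).mul h3.exp
  refine h5.congr_deriv ?_
  have hkey : (t+1) ^ (-β-1) = (t+1) ^ (-β) * (t+1)⁻¹ := by
    rw [show -β-1 = -β + (-1) by ring, Real.rpow_add ht, Real.rpow_neg_one]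
  rw [hkey]
  field_simp
  ring

lemma contDiffOn_u' (n : ℕ) (ah γ κ β : ℝ) :
    ContDiffOn ℝ (⊤ : ℕ∞) (fun p : Pt n => κ * (p.1+1) ^ (-β) *
      Real.exp (-γ * (1+‖p.2‖^2) ^ (ah/2) / (p.1+1))) {p : Pt n | 0 < p.1} := by
  intro p hp
  have ht : p.1 + 1 ≠ 0 := by have : (0:ℝ) < p.1 := hp; positivity
  have hpos : (0:ℝ) < 1 + ‖p.2‖^2 := by positivity
  apply ContDiffAt.contDiffWithinAt
  have h1 : ContDiffAt ℝ (⊤ : ℕ∞) (fun p : Pt n => p.1 + 1) p :=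
    (contDiff_fst.add contDiff_const).contDiffAt
  have h2 : ContDiffAt ℝ (⊤ : ℕ∞) (fun p : Pt n => (p.1+1) ^ (-β)) p :=
    ((Real.contDiffAt_rpow_const_of_ne (p := -β) ht).comp p h1 :)
  have h3 : ContDiffAt ℝ (⊤ : ℕ∞) (fun p : Pt n => 1 + ‖p.2‖^2) p :=
    (contDiffAt_const.add ((contDiff_snd.norm_sq ℝ).contDiffAt))
  have h4 : ContDiffAt ℝ (⊤ : ℕ∞) (fun p : Pt n => (1+‖p.2‖^2) ^ (ah/2)) p :=
    ((Real.contDiffAt_rpow_const_of_ne (p := ah/2) hpos.ne').comp p h3 :)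
  have h5 : ContDiffAt ℝ (⊤ : ℕ∞) (fun p : Pt n => -γ * (1+‖p.2‖^2) ^ (ah/2) / (p.1+1)) p :=
    (contDiffAt_const.mul h4).div h1 ht
  exact (contDiffAt_const.mul h2).mul h5.exp


lemma timeDeriv_neg' {n : ℕ} (u : Pt n → ℝ) (p : Pt n) :
    timeDeriv (fun r => -u r) p = -timeDeriv u p := by
  show deriv (fun s => -u (s, p.2)) p.1 = -deriv (fun s => u (s, p.2)) p.1
  exact deriv.neg

lemma Ldiv_neg' {n : ℕ} (a : Fin n → Fin n → Pt n → ℝ) (u : Pt n → ℝ) (p : Pt n) :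
    Ldiv a (fun r => -u r) p = -Ldiv a u p := by
  unfold Ldiv
  rw [← Finset.sum_neg_distrib]
  apply Finset.sum_congr rfl
  intro i _
  have hfun : (fun y => ∑ j, a i j (p.1, y) *
      fderiv ℝ (fun z => -u (p.1, z)) y (EuclideanSpace.single j 1))
      = fun y => -(∑ j, a i j (p.1, y) *
        fderiv ℝ (fun z => u (p.1, z)) y (EuclideanSpace.single j 1)) := by
    funext y
    rw [← Finset.sum_neg_distrib]
    apply Finset.sum_congr rfl
    intro j _
    rw [show (fun z : Xn n => -u (p.1, z)) = fun z => -((fun z : Xn n => u (p.1, z)) z)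
      from rfl, fderiv_fun_neg]
    simp [mul_neg]
  show fderiv ℝ (fun y => ∑ j, a i j (p.1, y) *
      fderiv ℝ (fun z => -u (p.1, z)) y (EuclideanSpace.single j 1)) p.2
      (EuclideanSpace.single i 1) = _
  rw [hfun, fderiv_fun_neg]
  simp

set_option maxHeartbeats 1000000 in
lemma main_ineq (n : ℕ) (ah γ κ q : ℝ) (hq : 0 < q - 1)
    (hγpos : 0 < γ) (hκpos : 0 < κ)
    (hκpow : κ ^ (q-1) = ah * n * γ - 1/(q-1))
    (hga : γ * ah ^ 2 = 1) (t : ℝ) (x : Xn n) (hp : 0 < t) :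
    timeDeriv (fun p : Pt n => κ * (p.1+1) ^ (-(1/(q-1))) *
        Real.exp (-γ * (1+‖p.2‖^2) ^ (ah/2) / (p.1+1))) (t, x)
      ≥ Ldiv (fun i j p => if i = j then (1+‖p.2‖^2) ^ ((2-ah)/2) else 0)
          (fun p : Pt n => κ * (p.1+1) ^ (-(1/(q-1))) *
            Real.exp (-γ * (1+‖p.2‖^2) ^ (ah/2) / (p.1+1))) (t, x)
        + (κ * (t+1) ^ (-(1/(q-1))) * Real.exp (-γ * (1+‖x‖^2) ^ (ah/2) / (t+1))) ^ q := by
  have ht1 : (0:ℝ) < t + 1 := by linarith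
  have hN : (0:ℝ) ≤ ‖x‖^2 := by positivity
  have hposN : (0:ℝ) < 1 + ‖x‖^2 := by positivity
  set N : ℝ := ‖x‖^2 with hNdef
  set P : ℝ := (1+N) ^ (ah/2) with hPdef
  set P' : ℝ := (1+N) ^ (ah/2-1) with hP'def
  have hPpos : 0 < P := Real.rpow_pos_of_pos hposN _
  have hP'pos : 0 < P' := Real.rpow_pos_of_pos hposN _
  have hPP : P = P' * (1+N) := by
    rw [hPdef, hP'def, show (ah:ℝ)/2 = (ah/2-1)+1 by ring, Real.rpow_add hposN,
      Real.rpow_one]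
    ring_nf
  set U : ℝ := κ * (t+1) ^ (-(1/(q-1))) * Real.exp (-γ * P / (t+1)) with hUdef
  have hU : 0 < U := by
    have := Real.rpow_pos_of_pos ht1 (-(1/(q-1)))
    rw [hUdef]; positivity
  have hTd : timeDeriv (fun p : Pt n => κ * (p.1+1) ^ (-(1/(q-1))) *
      Real.exp (-γ * (1+‖p.2‖^2) ^ (ah/2) / (p.1+1))) (t, x)
      = U * (-(1/(q-1))/(t+1) + γ * P/(t+1)^2) := by
    show deriv _ t = _
    exact (hasDerivAt_time' γ κ (1/(q-1)) P t ht1).deriv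
  have hL := Ldiv_eq' n ah γ κ (1/(q-1)) t ht1.ne' x
  have hupow : U ^ q ≤ U * ((ah * n * γ - 1/(q-1))/(t+1)) := by
    have h1 : U ^ q = U ^ (q-1) * U := by
      nth_rewrite 1 [show q = (q-1)+1 by ring]
      rw [Real.rpow_add hU, Real.rpow_one]
    have hT : ((t+1) ^ (-(1/(q-1))) : ℝ) ^ (q-1) = (t+1)⁻¹ := by
      rw [← Real.rpow_mul ht1.le, show -(1/(q-1))*(q-1) = -1 by field_simp,
        Real.rpow_neg_one]
    have hE : (Real.exp (-γ * P / (t+1))) ^ (q-1) ≤ 1 := by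
      rw [← Real.exp_mul]
      apply Real.exp_le_one_iff.2
      apply mul_nonpos_of_nonpos_of_nonneg _ hq.le
      rw [neg_mul, neg_div]
      exact neg_nonpos.2 (by positivity)
    have h2 : U ^ (q-1) ≤ κ ^ (q-1) * (t+1)⁻¹ := by
      rw [hUdef, Real.mul_rpow (by positivity) (Real.exp_pos _).le,
        Real.mul_rpow hκpos.le (by positivity), hT]
      calc κ ^ (q-1) * (t+1)⁻¹ * (Real.exp (-γ * P / (t+1))) ^ (q-1)
          ≤ κ ^ (q-1) * (t+1)⁻¹ * 1 := by
            apply mul_le_mul_of_nonneg_left hE (by positivity)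
        _ = κ ^ (q-1) * (t+1)⁻¹ := by ring
    calc U ^ q = U ^ (q-1) * U := h1
      _ ≤ (κ ^ (q-1) * (t+1)⁻¹) * U := mul_le_mul_of_nonneg_right h2 hU.le
      _ = U * ((ah * n * γ - 1/(q-1))/(t+1)) := by rw [hκpow]; ring
  rw [ge_iff_le, hTd]
  have hLd : Ldiv (fun i j p => if i = j then (1+‖p.2‖^2) ^ ((2-ah)/2) else 0)
      (fun p : Pt n => κ * (p.1+1) ^ (-(1/(q-1))) *
        Real.exp (-γ * (1+‖p.2‖^2) ^ (ah/2) / (p.1+1))) (t, x)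
      = U * (γ^2 * ah^2 * P' * N / (t+1)^2 - γ * ah * n / (t+1)) := hL
  rw [hLd]
  have key : γ^2 * ah^2 * P' * N ≤ γ * P := by
    have h3 : γ^2 * ah^2 = γ := by nlinarith [hga]
    rw [h3, hPP]
    nlinarith [hγpos, hP'pos, hN]
  have expand : U * (-(1/(q-1))/(t+1) + γ * P/(t+1)^2)
      - (U * (γ^2 * ah^2 * P' * N / (t+1)^2 - γ * ah * n / (t+1))
        + U * ((ah * n * γ - 1/(q-1))/(t+1)))
      = U * ((γ * P - γ^2 * ah^2 * P' * N)/(t+1)^2) := by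
    field_simp
    ring
  have hfin : U * (γ^2 * ah^2 * P' * N / (t+1)^2 - γ * ah * n / (t+1))
      + U * ((ah * n * γ - 1/(q-1))/(t+1))
      ≤ U * (-(1/(q-1))/(t+1) + γ * P/(t+1)^2) := by
    have hnn : 0 ≤ U * ((γ * P - γ^2 * ah^2 * P' * N)/(t+1)^2) := by
      apply mul_nonneg hU.le
      apply div_nonneg (by linarith) (by positivity)
    linarith [expand, hnn]
  calc U * (γ^2 * ah^2 * P' * N / (t+1)^2 - γ * ah * n / (t+1))
        + (κ * (t+1) ^ (-(1/(q-1))) * Real.exp (-γ * (1+‖x‖^2) ^ (ah/2) / (t+1))) ^ q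
      = U * (γ^2 * ah^2 * P' * N / (t+1)^2 - γ * ah * n / (t+1)) + U ^ q := by
        rw [hUdef]
    _ ≤ U * (γ^2 * ah^2 * P' * N / (t+1)^2 - γ * ah * n / (t+1))
        + U * ((ah * n * γ - 1/(q-1))/(t+1)) := by linarith [hupow]
    _ ≤ U * (-(1/(q-1))/(t+1) + γ * P/(t+1)^2) := hfin

/-- sharpness for `α ≤ 0`, `q > 1`, `q > 1 + α/n` (Example 3):
there are admissible coefficients satisfying condition (8) with the given `α`
and a smooth positive classical super-solution `u` whose negative `v := -u` is
a classical sub-solution.  Concretely, one may take any `α̂ > 0` with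
`q > 1 + α̂/n`, `a_{ij}(t,x) = (1+|x|²)^{(2−α̂)/2} δ_{ij}` and
`u(t,x) = κ (t+1)^{−1/(q−1)} exp(−γ (1+|x|²)^{α̂/2}/(t+1))`. -/
theorem sharpness_example_alpha_nonpos
    (n : ℕ) (hn : 1 ≤ n) (α q : ℝ) (hα : α ≤ 0)
    (hq1 : 1 < q) (hq2 : 1 + α / n < q) :
    ∃ (αhat γ κ : ℝ),
      0 < αhat ∧ 1 + αhat / n < q ∧
      1 / (αhat * n * (q - 1)) < γ ∧ γ ≤ 1 / αhat ^ 2 ∧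
      0 < κ ∧ κ ≤ (αhat * n * (γ - 1 / (αhat * n * (q - 1)))) ^ (1 / (q - 1)) ∧
      ∃ (a : Fin n → Fin n → Pt n → ℝ) (A : Pt n → ℝ) (u : Pt n → ℝ) (c : ℝ),
        -- the coefficients `a_{ij}(t,x) = (1+|x|²)^{(2−α̂)/2} δ_{ij}`
        (∀ i j, ∀ p : Pt n,
          a i j p = if i = j then (1 + ‖p.2‖ ^ 2) ^ ((2 - αhat) / 2) else 0) ∧
        -- the explicit function `u`
        (∀ p : Pt n, u p =
          κ * (p.1 + 1) ^ (-(1 / (q - 1))) *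
            Real.exp (-γ * (1 + ‖p.2‖ ^ 2) ^ (αhat / 2) / (p.1 + 1))) ∧
        -- symmetric
        (∀ i j, ∀ p : Pt n, a i j p = a j i p) ∧
        -- locally bounded
        (∀ i j, ∀ K : Set (Pt n), IsCompact K → ∃ M, ∀ p ∈ K, |a i j p| ≤ M) ∧
        -- non-negative quadratic form, bounded by `A(t,x)|ξ|²`
        (∀ p : Pt n, ∀ ξ : Xn n,
          0 ≤ ∑ i, ∑ j, a i j p * ξ i * ξ j ∧
          ∑ i, ∑ j, a i j p * ξ i * ξ j ≤ A p * ‖ξ‖ ^ 2) ∧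
        -- condition (8): `𝒜(R) ≤ c R^{2−α}` for all `R > 1`, with the given `α`
        0 < c ∧
        (∀ R : ℝ, 1 < R → ∀ p : Pt n, 0 < p.1 → R / 2 < ‖p.2‖ → ‖p.2‖ < R →
          A p ≤ c * R ^ (2 - α)) ∧
        -- `u` is smooth and positive on `S`
        ContDiffOn ℝ (⊤ : ℕ∞) u (halfSpace n) ∧
        (∀ p ∈ halfSpace n, 0 < u p) ∧
        -- `u` satisfies `∂u/∂t ≥ Lu + u^q` pointwise on `S`
        (∀ p ∈ halfSpace n, timeDeriv u p ≥ Ldiv a u p + u p ^ q) ∧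
        -- `v := −u` satisfies `∂v/∂t ≤ Lv + |v|^{q−1}v` pointwise on `S`
        (∀ p ∈ halfSpace n,
          timeDeriv (fun r => -u r) p ≤
            Ldiv a (fun r => -u r) p + oddPow q (-u p)) := by
  have hn' : (0:ℝ) < n := by exact_mod_cast Nat.pos_of_ne_zero (by omega)
  have hq : (0:ℝ) < q - 1 := by linarith
  have hnq : (0:ℝ) < n * (q-1) := by positivity
  set ah : ℝ := min 1 ((n:ℝ) * (q-1) / 2) with hahdef
  have hah : 0 < ah := lt_min one_pos (by positivity)
  have hah1 : ah ≤ 1 := min_le_left _ _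
  have hahlt : ah < (n:ℝ) * (q-1) :=
    lt_of_le_of_lt (min_le_right _ _) (by linarith)
  set γ : ℝ := 1 / ah ^ 2 with hγdef
  set β : ℝ := 1 / (q-1) with hβdef
  have hβpos : 0 < β := by positivity
  have hγ1 : 1 / (ah * n * (q-1)) < γ := by
    rw [hγdef]
    apply one_div_lt_one_div_of_lt (by positivity)
    calc ah ^ 2 = ah * ah := sq ah
    _ < ah * ((n:ℝ) * (q-1)) := by
        exact mul_lt_mul_of_pos_left hahlt hah
    _ = ah * n * (q-1) := by ring
  have hγpos : 0 < γ := by rw [hγdef]; positivity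
  have hinner : 0 < ah * n * (γ - 1 / (ah * n * (q-1))) := by
    apply mul_pos (by positivity)
    linarith
  set κ : ℝ := (ah * n * (γ - 1 / (ah * n * (q-1)))) ^ (1 / (q-1)) with hκdef
  have hκpos : 0 < κ := Real.rpow_pos_of_pos hinner _
  have hκpow : κ ^ (q-1) = ah * n * γ - β := by
    rw [hκdef, ← Real.rpow_mul hinner.le, one_div_mul_cancel hq.ne', Real.rpow_one, hβdef]
    field_simp
  refine ⟨ah, γ, κ, hah, ?_, hγ1, le_refl _, hκpos, le_refl _, ?_⟩
  · have h := (div_lt_iff₀ hn').2 (show ah < (q-1) * n by linarith [hahlt])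
    linarith
  refine ⟨fun i j p => if i = j then (1 + ‖p.2‖ ^ 2) ^ ((2 - ah) / 2) else 0,
    fun p => (1 + ‖p.2‖ ^ 2) ^ ((2 - ah) / 2),
    fun p => κ * (p.1 + 1) ^ (-(1 / (q - 1))) *
      Real.exp (-γ * (1 + ‖p.2‖ ^ 2) ^ (ah / 2) / (p.1 + 1)),
    (2:ℝ) ^ ((2 - ah) / 2),
    fun i j p => rfl, fun p => rfl, ?_, ?_, ?_, ?_, ?_, ?_, ?_, ?_, ?_⟩
  · -- symmetry
    intro i j p
    by_cases h : i = j
    · subst h; rfl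
    · simp [h, Ne.symm h]
  · -- locally bounded
    intro i j K hK
    have hc : Continuous (fun p : Pt n => if i = j then
        (1 + ‖p.2‖ ^ 2) ^ ((2 - ah) / 2) else (0:ℝ)) := by
      by_cases h : i = j
      · simp only [h, if_true]
        apply Continuous.rpow_const
        · exact continuous_const.add ((continuous_snd.norm).pow 2)
        · intro x
          left
          positivity
      · simp only [h, if_false]
        exact continuous_const
    obtain ⟨M, hM⟩ := hK.exists_bound_of_continuousOn hc.continuousOn
    exact ⟨M, fun p hp => by simpa [Real.norm_eq_abs] using hM p hp⟩
  · -- quadratic form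
    intro p ξ
    have hc0 : (0:ℝ) < (1 + ‖p.2‖ ^ 2) ^ ((2 - ah) / 2) :=
      Real.rpow_pos_of_pos (by positivity) _
    have hform : ∑ i, ∑ j, (if i = j then (1 + ‖p.2‖ ^ 2) ^ ((2 - ah) / 2) else (0:ℝ))
        * ξ i * ξ j = (1 + ‖p.2‖ ^ 2) ^ ((2 - ah) / 2) * ‖ξ‖ ^ 2 := by
      rw [← sum_self_mul' n ξ, Finset.mul_sum]
      apply Finset.sum_congr rfl
      intro i _
      simp only [ite_mul, zero_mul, Finset.sum_ite_eq, Finset.mem_univ, if_true]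
      ring
    rw [hform]
    constructor
    · positivity
    · exact le_refl _
  · -- c positive
    exact Real.rpow_pos_of_pos two_pos _
  · -- condition (8)
    intro R hR p hp hR2 hRn
    have hRpos : (0:ℝ) < R := by linarith
    have he : (0:ℝ) ≤ (2 - ah) / 2 := by linarith
    have h1 : (1 + ‖p.2‖ ^ 2 : ℝ) ≤ 2 * R ^ 2 := by
      nlinarith [norm_nonneg p.2]
    calc (1 + ‖p.2‖ ^ 2 : ℝ) ^ ((2 - ah) / 2)
        ≤ (2 * R ^ 2) ^ ((2 - ah) / 2) :=
          Real.rpow_le_rpow (by positivity) h1 he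
      _ = (2:ℝ) ^ ((2 - ah) / 2) * (R ^ 2) ^ ((2 - ah) / 2) :=
          Real.mul_rpow (by norm_num) (by positivity)
      _ = (2:ℝ) ^ ((2 - ah) / 2) * R ^ (2 - ah) := by
          rw [← Real.rpow_natCast R 2, ← Real.rpow_mul hRpos.le]
          congr 1
          push_cast
          ring
      _ ≤ (2:ℝ) ^ ((2 - ah) / 2) * R ^ (2 - α) := by
          apply mul_le_mul_of_nonneg_left _ (by positivity)
          exact Real.rpow_le_rpow_of_exponent_le hR.le (by linarith)
  · -- smoothness
    exact contDiffOn_u' n ah γ κ (1 / (q - 1))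
  · -- positivity of u
    intro p hp
    have hp1 : (0:ℝ) < p.1 + 1 := by have : (0:ℝ) < p.1 := hp; linarith
    have := Real.rpow_pos_of_pos hp1 (-(1 / (q - 1)))
    positivity
  · -- main differential inequality
    intro p hp
    obtain ⟨t, x⟩ := p
    exact main_ineq n ah γ κ q hq hγpos hκpos hκpow
      (by rw [hγdef, one_div, inv_mul_cancel₀ (pow_ne_zero 2 hah.ne')]) t x hp
  · -- the negative
    intro p hp
    obtain ⟨t, x⟩ := p
    have hga : γ * ah ^ 2 = 1 := by
      rw [hγdef, one_div, inv_mul_cancel₀ (pow_ne_zero 2 hah.ne')]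
    have h := main_ineq n ah γ κ q hq hγpos hκpos hκpow hga t x hp
    have ht1 : (0:ℝ) < t + 1 := by have : (0:ℝ) < t := hp; linarith
    rw [timeDeriv_neg', Ldiv_neg']
    beta_reduce
    have hU : (0:ℝ) < κ * (t + 1) ^ (-(1 / (q - 1))) *
        Real.exp (-γ * (1 + ‖x‖ ^ 2) ^ (ah / 2) / (t + 1)) := by
      have := Real.rpow_pos_of_pos ht1 (-(1 / (q - 1)))
      positivity
    have h3 : oddPow q (-(κ * (t + 1) ^ (-(1 / (q - 1))) *
        Real.exp (-γ * (1 + ‖x‖ ^ 2) ^ (ah / 2) / (t + 1))))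
        = -((κ * (t + 1) ^ (-(1 / (q - 1))) *
          Real.exp (-γ * (1 + ‖x‖ ^ 2) ^ (ah / 2) / (t + 1))) ^ q) := by
      have hsplit : (κ * (t + 1) ^ (-(1 / (q - 1))) *
          Real.exp (-γ * (1 + ‖x‖ ^ 2) ^ (ah / 2) / (t + 1))) ^ (q-1) *
          (κ * (t + 1) ^ (-(1 / (q - 1))) *
          Real.exp (-γ * (1 + ‖x‖ ^ 2) ^ (ah / 2) / (t + 1)))
          = (κ * (t + 1) ^ (-(1 / (q - 1))) *
          Real.exp (-γ * (1 + ‖x‖ ^ 2) ^ (ah / 2) / (t + 1))) ^ q := by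
        rw [Real.rpow_sub hU, Real.rpow_one]
        field_simp
      unfold oddPow
      rw [abs_neg, abs_of_pos hU, ← hsplit, mul_neg]
    rw [h3]
    linarith [h]
end
end

section
/- For every real q ≥ 1 and all real numbers u and v, one has (|u|^{q−1}u − |v|^{q−1}v)(u − v) ≥ 2^{1−q} |u − v|^{q+1}. -/
open Real

private lemma opd_superadd {p : ℝ} (hp : 1 ≤ p) {a b : ℝ} (ha : 0 ≤ a) (hb : 0 ≤ b) :
    a ^ p + b ^ p ≤ (a + b) ^ p := by
  have h := NNReal.coe_le_coe.2 (NNReal.add_rpow_le_rpow_add a.toNNReal b.toNNReal hp)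
  simpa [NNReal.coe_rpow, Real.coe_toNNReal a ha, Real.coe_toNNReal b hb] using h

private lemma opd_two_bound {p : ℝ} (hp : 1 ≤ p) {a b : ℝ} (ha : 0 ≤ a) (hb : 0 ≤ b) :
    2 ^ (1 - p) * (a + b) ^ p ≤ a ^ p + b ^ p := by
  have h := NNReal.coe_le_coe.2 (NNReal.rpow_add_le_mul_rpow_add_rpow a.toNNReal b.toNNReal hp)
  simp only [NNReal.coe_mul, NNReal.coe_add, NNReal.coe_rpow, NNReal.coe_ofNat,
    Real.coe_toNNReal a ha, Real.coe_toNNReal b hb] at h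
  have h2 : (0:ℝ) < 2 ^ (1 - p) := Real.rpow_pos_of_pos (by norm_num) _
  have h3 : (2:ℝ) ^ (1 - p) * 2 ^ (p - 1) = 1 := by
    rw [← Real.rpow_add (by norm_num)]; norm_num
  calc 2 ^ (1 - p) * (a + b) ^ p ≤ 2 ^ (1 - p) * (2 ^ (p - 1) * (a ^ p + b ^ p)) := by
        exact mul_le_mul_of_nonneg_left h h2.le
    _ = a ^ p + b ^ p := by rw [← mul_assoc, h3, one_mul]

private lemma opd_abs_nonneg (q : ℝ) (hq : 1 ≤ q) {a : ℝ} (ha : 0 ≤ a) :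
    |a| ^ (q - 1) * a = a ^ q := by
  rcases ha.eq_or_lt with h | h
  · simp [← h, Real.zero_rpow (by linarith : q ≠ 0)]
  · rw [abs_of_pos h, ← Real.rpow_add_one h.ne', sub_add_cancel]

private lemma opd_key (q : ℝ) (hq : 1 ≤ q) {a b : ℝ} (hab : b ≤ a) :
    2 ^ (1 - q) * (a - b) ^ q ≤ |a| ^ (q - 1) * a - |b| ^ (q - 1) * b := by
  have h21 : (2:ℝ) ^ (1 - q) ≤ 1 :=
    Real.rpow_le_one_of_one_le_of_nonpos (by norm_num) (by linarith)
  rcases le_or_gt 0 b with hb | hb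
  · -- 0 ≤ b ≤ a
    have ha : 0 ≤ a := hb.trans hab
    rw [opd_abs_nonneg q hq ha, opd_abs_nonneg q hq hb]
    have h1 : (a - b) ^ q + b ^ q ≤ a ^ q := by
      have := opd_superadd hq (sub_nonneg.2 hab) hb
      rwa [sub_add_cancel] at this
    have h2 : (0:ℝ) ≤ (a - b) ^ q := Real.rpow_nonneg (by linarith) _
    nlinarith
  · rcases le_or_gt a 0 with ha | ha
    · -- b < a ≤ 0
      have h1 : |a| ^ (q - 1) * a = -((-a) ^ q) := by
        have := opd_abs_nonneg q hq (by linarith : (0:ℝ) ≤ -a)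
        rw [abs_neg] at this; nlinarith [this]
      have h2 : |b| ^ (q - 1) * b = -((-b) ^ q) := by
        have := opd_abs_nonneg q hq (by linarith : (0:ℝ) ≤ -b)
        rw [abs_neg] at this; nlinarith [this]
      rw [h1, h2]
      have h3 : ((-b) - (-a)) ^ q + (-a) ^ q ≤ (-b) ^ q := by
        have := opd_superadd hq (by linarith : (0:ℝ) ≤ -b - -a) (by linarith : (0:ℝ) ≤ -a)
        rwa [sub_add_cancel] at this
      have h4 : (0:ℝ) ≤ (a - b) ^ q := Real.rpow_nonneg (by linarith) _
      have h5 : ((-b) - (-a)) = a - b := by ring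
      rw [h5] at h3
      nlinarith
    · -- b < 0 < a
      rw [opd_abs_nonneg q hq ha.le]
      have h2 : |b| ^ (q - 1) * b = -((-b) ^ q) := by
        have := opd_abs_nonneg q hq (by linarith : (0:ℝ) ≤ -b)
        rw [abs_neg] at this; nlinarith [this]
      rw [h2]
      have h3 := opd_two_bound hq ha.le (by linarith : (0:ℝ) ≤ -b)
      have h5 : a + -b = a - b := by ring
      rw [h5] at h3
      linarith

/-- the elementary inequality
`(|u|^{q−1}u − |v|^{q−1}v)(u − v) ≥ 2^{1−q} |u − v|^{q+1}` for `q ≥ 1`. -/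
theorem odd_power_difference_inequality
    (q : ℝ) (hq : 1 ≤ q) (u v : ℝ) :
    (|u| ^ (q - 1) * u - |v| ^ (q - 1) * v) * (u - v) ≥
      2 ^ (1 - q) * |u - v| ^ (q + 1) := by
  have main : ∀ a b : ℝ, b ≤ a →
      2 ^ (1 - q) * |a - b| ^ (q + 1) ≤
        (|a| ^ (q - 1) * a - |b| ^ (q - 1) * b) * (a - b) := by
    intro a b hab
    rcases hab.eq_or_lt with h | h
    · subst h
      simp [Real.zero_rpow (by linarith : q + 1 ≠ 0)]
    · have hd : 0 < a - b := sub_pos.2 h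
      rw [abs_of_pos hd]
      calc 2 ^ (1 - q) * (a - b) ^ (q + 1)
          = (2 ^ (1 - q) * (a - b) ^ q) * (a - b) := by
            rw [Real.rpow_add_one hd.ne']; ring
        _ ≤ (|a| ^ (q - 1) * a - |b| ^ (q - 1) * b) * (a - b) :=
            mul_le_mul_of_nonneg_right (opd_key q hq hab) hd.le
  rcases le_total v u with h | h
  · exact main u v h
  · rw [ge_iff_le, abs_sub_comm,
      show (|u| ^ (q - 1) * u - |v| ^ (q - 1) * v) * (u - v)
          = (|v| ^ (q - 1) * v - |u| ^ (q - 1) * u) * (v - u) by ring]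
    exact main v u h
end

section
/- Let n ≥ 1, q > 1, s > 1, T > 0, R > 1, and let the coefficients a_{ij} be as specified. Let w be a non-negative C¹ function on S with w^q locally integrable such that ∫_S [ w_t φ + Σ_{i,j} a_{ij}(t,x)(∂φ/∂x_i)(∂w/∂x_j) ] dt dx ≥ ∫_S w^q φ dt dx for every nonnegative φ ∈ C_c^∞(S). Let η : [0,∞) → [0,1] be a C^∞ function with η' ≥ 0 which equals 0 on [0,τ] and 1 on [2τ,∞) for some τ > 0, and let ζ : [0,∞) × ℝⁿ → [0,1] be a C^∞ function equal to 1 on [0,T/2] × {|x| ≤ R/2} and equal to 0 outside [0,T] × {|x| ≤ R}. Then s ∫₀^T ∫_{|x|<R} w |ζ_t| ζ^{s−1} η² dt dx + s ∫₀^T ∫_{|x|<R} Σ_{i,j=1}^n a_{ij}(t,x) (∂ζ/∂x_i)(∂w/∂x_j) ζ^{s−1} η² dt dx ≥ ∫₀^T ∫_{|x|<R} w^q ζ^s η² dt dx. -/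
open MeasureTheory Real

noncomputable section

/-- Partial derivative in the time variable. -/
noncomputable def pdT {n : ℕ} (w : Pt n → ℝ) (p : Pt n) : ℝ :=
  fderiv ℝ w p (1, 0)

/-- Partial derivative in the space variable `x_j`. -/
noncomputable def pdX {n : ℕ} (w : Pt n → ℝ) (j : Fin n) (p : Pt n) : ℝ :=
  fderiv ℝ w p (0, EuclideanSpace.single j 1)

/-- Condition (8): `𝒜(R) ≤ c R^{2-α}` for all `R > 1`, expressed as an a.e. bound
on the majorant `A` over the region `{(t,x) : t > 0, R/2 < |x| < R}`. -/
def Cond8 {n : ℕ} (A : Pt n → ℝ) (α c : ℝ) : Prop :=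
  ∀ R : ℝ, 1 < R →
    ∀ᵐ p ∂(volume.restrict
        {p : Pt n | 0 < p.1 ∧ R / 2 < ‖p.2‖ ∧ ‖p.2‖ < R}),
      A p ≤ c * R ^ (2 - α)

/-- `u` is an entire weak solution of `u_t ≥ Lu + |u|^{q−1}u` in `S`. -/
def WeakSuperSol {n : ℕ} (a : Fin n → Fin n → Pt n → ℝ) (q : ℝ)
    (u : Pt n → ℝ) : Prop :=
  ∀ φ : Pt n → ℝ, ContDiff ℝ (⊤ : ℕ∞) φ → HasCompactSupport φ →
    tsupport φ ⊆ halfSpace n → (∀ p, 0 ≤ φ p) →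
    0 ≤ ∫ p in halfSpace n,
        (pdT u p * φ p + ∑ i, ∑ j, a i j p * pdX φ i p * pdX u j p
          - oddPow q (u p) * φ p)

/-- `v` is an entire weak solution of `v_t ≤ Lv + |v|^{q−1}v` in `S`. -/
def WeakSubSol {n : ℕ} (a : Fin n → Fin n → Pt n → ℝ) (q : ℝ)
    (v : Pt n → ℝ) : Prop :=
  ∀ φ : Pt n → ℝ, ContDiff ℝ (⊤ : ℕ∞) φ → HasCompactSupport φ →
    tsupport φ ⊆ halfSpace n → (∀ p, 0 ≤ φ p) →
    ∫ p in halfSpace n,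
        (pdT v p * φ p + ∑ i, ∑ j, a i j p * pdX φ i p * pdX v j p
          - oddPow q (v p) * φ p) ≤ 0

/-- Helper: if `f` vanishes on an open set `V`, its `fderiv` vanishes at points of `V`. -/
private lemma fderiv_zero_of_zero_on_open {E : Type*} [NormedAddCommGroup E]
    [NormedSpace ℝ E] {f : E → ℝ} {V : Set E} (hV : IsOpen V)
    (h0 : ∀ q ∈ V, f q = 0) {p : E} (hp : p ∈ V) : fderiv ℝ f p = 0 := by
  have h : f =ᶠ[nhds p] fun _ => (0 : ℝ) :=
    Filter.eventuallyEq_of_mem (hV.mem_nhds hp) h0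
  exact h.fderiv_eq.trans (fderiv_const_apply 0)

/-- Helper: a function continuous on an open set `V` and vanishing outside a
closed `K ⊆ V` is continuous. -/
private lemma continuous_of_continuousOn_of_zero {E : Type*} [TopologicalSpace E]
    {f : E → ℝ} {V K : Set E} (hV : IsOpen V) (hKcl : IsClosed K) (hKV : K ⊆ V)
    (hc : ContinuousOn f V) (h0 : ∀ p, p ∉ K → f p = 0) : Continuous f := by
  rw [continuous_iff_continuousAt]
  intro p
  by_cases hp : p ∈ V
  · exact hc.continuousAt (hV.mem_nhds hp)
  · have hpK : p ∉ K := fun h => hp (hKV h)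
    have h : f =ᶠ[nhds p] fun _ => (0 : ℝ) :=
      Filter.eventuallyEq_of_mem (hKcl.isOpen_compl.mem_nhds hpK) fun q hq => h0 q hq
    exact (continuousAt_congr h).mpr continuousAt_const

set_option maxHeartbeats 1000000 in
/-- the cutoff inequality (21).  If the non-negative function `w`
satisfies `∫_S [w_t φ + Σ a_{ij} ∂φ/∂x_i ∂w/∂x_j] ≥ ∫_S w^q φ` for all
nonnegative test functions `φ`, and `η`, `ζ` are the cutoff functions
described, then
`s ∫∫ w |ζ_t| ζ^{s−1} η² + s ∫∫ Σ a_{ij} ∂ζ/∂x_i ∂w/∂x_j ζ^{s−1} η²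
  ≥ ∫∫ w^q ζ^s η²`, the integrals being over `(0,T) × B(R)`. -/
theorem cutoff_inequality
    (n : ℕ) (hn : 1 ≤ n) (q s T R τ : ℝ)
    (hq : 1 < q) (hs : 1 < s) (hT : 0 < T) (hR : 1 < R) (hτ : 0 < τ)
    (a : Fin n → Fin n → Pt n → ℝ)
    (ha_meas : ∀ i j, Measurable (a i j))
    (ha_locbdd : ∀ i j, ∀ K : Set (Pt n), IsCompact K → K ⊆ halfSpace n →
      ∃ M, ∀ p ∈ K, |a i j p| ≤ M)
    (ha_symm : ∀ i j, ∀ᵐ p ∂(volume.restrict (halfSpace n)), a i j p = a j i p)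
    (hform : ∀ᵐ p ∂(volume.restrict (halfSpace n)), ∀ ξ : Xn n,
      0 ≤ ∑ i, ∑ j, a i j p * ξ i * ξ j)
    (w : Pt n → ℝ)
    (hw : ContDiffOn ℝ 1 w (halfSpace n))
    (hw_nonneg : ∀ p ∈ halfSpace n, 0 ≤ w p)
    (hw_int : LocallyIntegrableOn (fun p => w p ^ q) (halfSpace n) volume)
    (hw_sol : ∀ φ : Pt n → ℝ, ContDiff ℝ (⊤ : ℕ∞) φ → HasCompactSupport φ →
      tsupport φ ⊆ halfSpace n → (∀ p, 0 ≤ φ p) →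
      ∫ p in halfSpace n,
          (pdT w p * φ p + ∑ i, ∑ j, a i j p * pdX φ i p * pdX w j p) ≥
      ∫ p in halfSpace n, w p ^ q * φ p)
    -- the time cutoff `η : [0,∞) → [0,1]`
    (η : ℝ → ℝ)
    (hη_smooth : ContDiff ℝ (⊤ : ℕ∞) η)
    (hη_range : ∀ t, η t ∈ Set.Icc (0 : ℝ) 1)
    (hη_mono : ∀ t, 0 ≤ deriv η t)
    (hη_zero : ∀ t ≤ τ, η t = 0)
    (hη_one : ∀ t, 2 * τ ≤ t → η t = 1)
    -- the space-time cutoff `ζ : [0,∞) × ℝⁿ → [0,1]`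
    (ζ : Pt n → ℝ)
    (hζ_smooth : ContDiff ℝ (⊤ : ℕ∞) ζ)
    (hζ_range : ∀ p, ζ p ∈ Set.Icc (0 : ℝ) 1)
    (hζ_one : ∀ p : Pt n, p.1 ∈ Set.Icc 0 (T / 2) → ‖p.2‖ ≤ R / 2 → ζ p = 1)
    (hζ_zero : ∀ p : Pt n, (T < p.1 ∨ R < ‖p.2‖) → ζ p = 0) :
    s * (∫ p in Set.Ioo (0 : ℝ) T ×ˢ Metric.ball (0 : Xn n) R,
          w p * |pdT ζ p| * ζ p ^ (s - 1) * η p.1 ^ 2)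
    + s * (∫ p in Set.Ioo (0 : ℝ) T ×ˢ Metric.ball (0 : Xn n) R,
          (∑ i, ∑ j, a i j p * pdX ζ i p * pdX w j p) *
            ζ p ^ (s - 1) * η p.1 ^ 2)
    ≥ ∫ p in Set.Ioo (0 : ℝ) T ×ˢ Metric.ball (0 : Xn n) R,
        w p ^ q * ζ p ^ s * η p.1 ^ 2 := by
  ------------------------------------------------------------------
  -- Basic sets
  ------------------------------------------------------------------
  have hs0 : (0:ℝ) < s := by linarith
  have hs1 : (0:ℝ) < s - 1 := by linarith
  have hq0 : (0:ℝ) ≤ q := by linarith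
  have hU : IsOpen (halfSpace n) := isOpen_lt continuous_const continuous_fst
  have hUm : MeasurableSet (halfSpace n) := hU.measurableSet
  set K : Set (Pt n) := Set.Icc τ T ×ˢ Metric.closedBall (0 : Xn n) R with hK_def
  have hK : IsCompact K := isCompact_Icc.prod (isCompact_closedBall _ _)
  have hKU : K ⊆ halfSpace n := fun p hp => lt_of_lt_of_le hτ hp.1.1
  have hKc : ∀ p : Pt n, p ∉ K → p.1 < τ ∨ T < p.1 ∨ R < ‖p.2‖ := by
    intro p hp
    by_contra hcon
    push_neg at hcon
    obtain ⟨h1, h2, h3⟩ := hcon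
    exact hp ⟨⟨h1, h2⟩, by simpa [Metric.mem_closedBall, dist_eq_norm] using h3⟩
  ------------------------------------------------------------------
  -- Cutoff function facts
  ------------------------------------------------------------------
  have hη0 : ∀ t, 0 ≤ η t := fun t => (hη_range t).1
  have hη1 : ∀ t, η t ≤ 1 := fun t => (hη_range t).2
  have hηz : ∀ t : ℝ, t < τ → η t = 0 ∧ deriv η t = 0 := by
    intro t ht
    have h : η =ᶠ[nhds t] fun _ => (0:ℝ) :=
      Filter.eventuallyEq_of_mem (Iio_mem_nhds ht) fun u hu => hη_zero u (le_of_lt hu)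
    exact ⟨hη_zero t ht.le, by rw [h.deriv_eq]; simp⟩
  have hζ0 : ∀ p, 0 ≤ ζ p := fun p => (hζ_range p).1
  have hζ1 : ∀ p, ζ p ≤ 1 := fun p => (hζ_range p).2
  -- ζ vanishes also on the closed bad region
  have hζcl : ∀ p : Pt n, (T ≤ p.1 ∨ R ≤ ‖p.2‖) → ζ p = 0 := by
    intro p hp
    rcases hp with hp | hp
    · set g : ℝ → ℝ := fun u => ζ (p.1 + u, p.2) with hg_def
      have hgc : Continuous g :=
        hζ_smooth.continuous.comp ((continuous_const.add continuous_id).prodMk continuous_const)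
      have h1 : Filter.Tendsto g (nhdsWithin 0 (Set.Ioi 0)) (nhds (g 0)) :=
        (hgc.tendsto 0).mono_left nhdsWithin_le_nhds
      have h2 : Filter.Tendsto g (nhdsWithin 0 (Set.Ioi 0)) (nhds 0) := by
        apply Filter.Tendsto.congr' _ tendsto_const_nhds
        filter_upwards [self_mem_nhdsWithin] with u hu
        exact (hζ_zero (p.1 + u, p.2) (Or.inl (by simp only []; linarith [Set.mem_Ioi.mp hu]))).symm
      have := tendsto_nhds_unique h1 h2
      simpa [hg_def] using this
    · have hp2 : 0 < ‖p.2‖ := lt_of_lt_of_le (by linarith) hp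
      set g : ℝ → ℝ := fun u => ζ (p.1, (1 + u) • p.2) with hg_def
      have hgc : Continuous g :=
        hζ_smooth.continuous.comp
          (continuous_const.prodMk ((continuous_const.add continuous_id).smul continuous_const))
      have h1 : Filter.Tendsto g (nhdsWithin 0 (Set.Ioi 0)) (nhds (g 0)) :=
        (hgc.tendsto 0).mono_left nhdsWithin_le_nhds
      have h2 : Filter.Tendsto g (nhdsWithin 0 (Set.Ioi 0)) (nhds 0) := by
        apply Filter.Tendsto.congr' _ tendsto_const_nhds
        filter_upwards [self_mem_nhdsWithin] with u hu
        refine (hζ_zero (p.1, (1 + u) • p.2) (Or.inr ?_)).symm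
        have hu0 : (0:ℝ) < u := Set.mem_Ioi.mp hu
        have : ‖(1 + u) • p.2‖ = (1 + u) * ‖p.2‖ := by
          rw [norm_smul, Real.norm_eq_abs, abs_of_pos (by linarith)]
        rw [this]
        nlinarith
      have := tendsto_nhds_unique h1 h2
      simpa [hg_def] using this
  have hζd : ∀ p : Pt n, (T < p.1 ∨ R < ‖p.2‖) → fderiv ℝ ζ p = 0 := by
    intro p hp
    rcases hp with hp | hp
    · exact fderiv_zero_of_zero_on_open (V := {q : Pt n | T < q.1})
        (isOpen_lt continuous_const continuous_fst)
        (fun q hq => hζ_zero q (Or.inl hq)) hp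
    · exact fderiv_zero_of_zero_on_open (V := {q : Pt n | R < ‖q.2‖})
        (isOpen_lt continuous_const (continuous_norm.comp continuous_snd))
        (fun q hq => hζ_zero q (Or.inr hq)) hp
  -- vanishing dichotomy outside K
  have hvan : ∀ p : Pt n, p ∉ K →
      (η p.1 = 0 ∧ deriv η p.1 = 0) ∨ (ζ p = 0 ∧ fderiv ℝ ζ p = 0) := by
    intro p hp
    rcases hKc p hp with h | h | h
    · exact Or.inl (hηz p.1 h)
    · exact Or.inr ⟨hζcl p (Or.inl h.le), hζd p (Or.inl h)⟩
    · exact Or.inr ⟨hζcl p (Or.inr h.le), hζd p (Or.inr h)⟩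
  have hvanU : ∀ p : Pt n, p ∉ halfSpace n → η p.1 = 0 ∧ deriv η p.1 = 0 := by
    intro p hp
    have : p.1 ≤ 0 := le_of_not_gt hp
    exact hηz p.1 (by linarith)
  ------------------------------------------------------------------
  -- Integrability machinery
  ------------------------------------------------------------------
  have intg : ∀ f : Pt n → ℝ, ContinuousOn f (halfSpace n) →
      (∀ p, p ∉ K → f p = 0) → Integrable f := by
    intro f hc h0
    exact (continuous_of_continuousOn_of_zero hU hK.isClosed hKU hc h0).integrable_of_hasCompactSupport
      (HasCompactSupport.intro hK h0)
  -- a uniform bound on the coefficients over K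
  obtain ⟨M, hM0, hMb⟩ : ∃ M : ℝ, 0 ≤ M ∧ ∀ i j, ∀ p ∈ K, |a i j p| ≤ M := by
    choose Mf hMf using fun ij : Fin n × Fin n => ha_locbdd ij.1 ij.2 K hK hKU
    refine ⟨∑ ij : Fin n × Fin n, max (Mf ij) 0,
      Finset.sum_nonneg fun ij _ => le_max_right _ _, fun i j p hp => ?_⟩
    calc |a i j p| ≤ Mf (i, j) := hMf (i, j) p hp
      _ ≤ max (Mf (i, j)) 0 := le_max_left _ _
      _ ≤ ∑ ij : Fin n × Fin n, max (Mf ij) 0 :=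
          Finset.single_le_sum (f := fun ij => max (Mf ij) 0) (fun ij _ => le_max_right _ _) (Finset.mem_univ (i, j))
  have intg_a : ∀ (i j : Fin n) (g : Pt n → ℝ), ContinuousOn g (halfSpace n) →
      (∀ p, p ∉ K → g p = 0) → Integrable (fun p => a i j p * g p) := by
    intro i j g hc h0
    have hgcont : Continuous g := continuous_of_continuousOn_of_zero hU hK.isClosed hKU hc h0
    have hgi : Integrable g := hgcont.integrable_of_hasCompactSupport (HasCompactSupport.intro hK h0)
    refine Integrable.mono' (hgi.abs.const_mul M)
      (((ha_meas i j).mul hgcont.measurable).aestronglyMeasurable)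
      (Filter.Eventually.of_forall fun p => ?_)
    by_cases hp : p ∈ K
    · rw [Real.norm_eq_abs, abs_mul]
      exact mul_le_mul_of_nonneg_right (hMb i j p hp) (abs_nonneg _)
    · simp [h0 p hp]
  ------------------------------------------------------------------
  -- Regularity of w and the cutoffs
  ------------------------------------------------------------------
  have hwct : ContinuousOn w (halfSpace n) := hw.continuousOn
  have hwd : ∀ p ∈ halfSpace n, DifferentiableAt ℝ w p := fun p hp =>
    (hw.contDiffAt (hU.mem_nhds hp)).differentiableAt one_ne_zero
  have hwfd : ContinuousOn (fderiv ℝ w) (halfSpace n) :=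
    hw.continuousOn_fderiv_of_isOpen hU le_rfl
  have hpdTw : ContinuousOn (pdT w) (halfSpace n) := hwfd.clm_apply continuousOn_const
  have hpdXw : ∀ j, ContinuousOn (pdX w j) (halfSpace n) := fun j =>
    hwfd.clm_apply continuousOn_const
  have hwqct : ContinuousOn (fun p => w p ^ q) (halfSpace n) :=
    hwct.rpow_const fun p _ => Or.inr hq0
  have hζc : Continuous ζ := hζ_smooth.continuous
  have hζfd : Continuous (fderiv ℝ ζ) := hζ_smooth.continuous_fderiv (by simp)
  have hpdTζ : Continuous (pdT ζ) := hζfd.clm_apply continuous_const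
  have hpdXζ : ∀ i, Continuous (pdX ζ i) := fun i => hζfd.clm_apply continuous_const
  have hηc : Continuous η := hη_smooth.continuous
  have hηd : Continuous (deriv η) := hη_smooth.continuous_deriv (by simp)
  have hη2c : Continuous fun p : Pt n => η p.1 ^ 2 := ((hηc.comp continuous_fst).pow 2)
  ------------------------------------------------------------------
  -- the summed quadratic form S0
  ------------------------------------------------------------------
  set S0 : Pt n → ℝ := fun p => ∑ i, ∑ j, a i j p * pdX ζ i p * pdX w j p with hS0_def
  have hS0meas : AEMeasurable S0 (volume.restrict (halfSpace n)) := by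
    apply Finset.aemeasurable_fun_sum
    intro i _
    apply Finset.aemeasurable_fun_sum
    intro j _
    exact ((ha_meas i j).aemeasurable.mul (hpdXζ i).measurable.aemeasurable).mul
      ((hpdXw j).aemeasurable hUm)
  ------------------------------------------------------------------
  -- the key inequality for the regularized test function, for fixed ε
  ------------------------------------------------------------------
  have key : ∀ ε : ℝ, 0 < ε → ε ≤ 1 →
      (∫ p in halfSpace n, w p ^ q * ((ζ p + ε) ^ s - ε ^ s) * η p.1 ^ 2)
        ≤ s * (∫ p in halfSpace n, w p * |pdT ζ p| * (ζ p + ε) ^ (s - 1) * η p.1 ^ 2)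
          + s * (∫ p in halfSpace n, S0 p * (ζ p + ε) ^ (s - 1) * η p.1 ^ 2) := by
    intro ε hε0 hε1
    have hbc : Continuous fun p : Pt n => (ζ p + ε) ^ (s - 1) :=
      (hζc.add continuous_const).rpow_const fun p => Or.inl (ne_of_gt (add_pos_of_nonneg_of_pos (hζ0 p) hε0))
    have hb0 : ∀ p : Pt n, 0 ≤ (ζ p + ε) ^ (s - 1) := fun p =>
      Real.rpow_nonneg (by linarith [hζ0 p]) _
    set φ : Pt n → ℝ := fun p => ((ζ p + ε) ^ s - ε ^ s) * η p.1 ^ 2 with hφ_def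
    have hφc : ContDiff ℝ (⊤ : ℕ∞) φ := by
      have h1 : ContDiff ℝ (⊤ : ℕ∞) fun p : Pt n => (ζ p + ε) ^ s := by
        rw [contDiff_iff_contDiffAt]
        intro p
        exact (hζ_smooth.contDiffAt.add contDiffAt_const).rpow_const_of_ne (ne_of_gt (by linarith [hζ0 p]))
      exact (h1.sub contDiff_const).mul ((hη_smooth.comp contDiff_fst).pow 2)
    have hφ0 : ∀ p, p ∉ K → φ p = 0 := by
      intro p hp
      rcases hvan p hp with ⟨h1, _⟩ | ⟨h1, _⟩ <;>
        simp [hφ_def, h1]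
    have hφcs : HasCompactSupport φ := HasCompactSupport.intro hK hφ0
    have hφU : tsupport φ ⊆ halfSpace n :=
      (closure_minimal (Function.support_subset_iff'.mpr hφ0) hK.isClosed).trans hKU
    have hεle : ∀ p : Pt n, ε ^ s ≤ (ζ p + ε) ^ s := fun p =>
      Real.rpow_le_rpow hε0.le (by linarith [hζ0 p]) (by linarith)
    have hφnn : ∀ p, 0 ≤ φ p := by
      intro p
      apply mul_nonneg _ (sq_nonneg _)
      linarith [hεle p]
    have hφderiv : ∀ p : Pt n, HasFDerivAt φ
        ((((ζ p + ε) ^ s - ε ^ s)) • ((2 * η p.1 ^ 1 * deriv η p.1) •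
            ContinuousLinearMap.fst ℝ ℝ (Xn n))
          + (η p.1 ^ 2) • ((s * (ζ p + ε) ^ (s - 1)) • fderiv ℝ ζ p)) p := by
      intro p
      have hζp : HasFDerivAt (fun q : Pt n => ζ q + ε) (fderiv ℝ ζ p) p :=
        ((hζ_smooth.differentiable (by simp) p).hasFDerivAt).add_const ε
      have h1 : HasFDerivAt (fun q : Pt n => (ζ q + ε) ^ s - ε ^ s)
          ((s * (ζ p + ε) ^ (s - 1)) • fderiv ℝ ζ p) p :=
        ((Real.hasDerivAt_rpow_const (x := ζ p + ε) (p := s)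
          (Or.inl (ne_of_gt (by linarith [hζ0 p])))).comp_hasFDerivAt p hζp).sub_const _
      have hη' : HasDerivAt η (deriv η p.1) p.1 :=
        (hη_smooth.differentiable (by simp) p.1).hasDerivAt
      have h2 : HasFDerivAt (fun q : Pt n => η q.1 ^ 2)
          ((2 * η p.1 ^ 1 * deriv η p.1) • ContinuousLinearMap.fst ℝ ℝ (Xn n)) p := by
        have h3 := (hη'.pow 2).comp_hasFDerivAt p
          (hasFDerivAt_fst : HasFDerivAt Prod.fst (ContinuousLinearMap.fst ℝ ℝ (Xn n)) p)
        simpa [Function.comp_def] using h3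
      exact h1.mul h2
    have hφT : ∀ p : Pt n, pdT φ p =
        ((ζ p + ε) ^ s - ε ^ s) * (2 * η p.1 * deriv η p.1)
          + η p.1 ^ 2 * (s * (ζ p + ε) ^ (s - 1) * pdT ζ p) := by
      intro p
      have h := (hφderiv p).fderiv
      simp only [pdT, h, ContinuousLinearMap.add_apply, ContinuousLinearMap.smul_apply,
        ContinuousLinearMap.coe_fst', smul_eq_mul, pow_one]
      ring
    have hφX : ∀ (i : Fin n) (p : Pt n), pdX φ i p =
        η p.1 ^ 2 * (s * (ζ p + ε) ^ (s - 1) * pdX ζ i p) := by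
      intro i p
      have h := (hφderiv p).fderiv
      simp only [pdX, h, ContinuousLinearMap.add_apply, ContinuousLinearMap.smul_apply,
        ContinuousLinearMap.coe_fst', smul_eq_mul, pow_one]
      ring
    have hφT0 : ∀ p, p ∉ K → pdT φ p = 0 := by
      intro p hp
      rw [hφT p]
      rcases hvan p hp with ⟨h1, h2⟩ | ⟨h1, h2⟩
      · simp [h1, h2]
      · simp [pdT, h1, h2]
    have hφX0 : ∀ (i : Fin n) (p), p ∉ K → pdX φ i p = 0 := by
      intro i p hp
      rw [hφX i p]
      rcases hvan p hp with ⟨h1, _⟩ | ⟨_, h2⟩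
      · simp [h1]
      · simp [pdX, h2]
    have hφcont : Continuous φ := hφc.continuous
    have hpdTφc : Continuous (pdT φ) :=
      (hφc.continuous_fderiv (by simp)).clm_apply continuous_const
    have hpdXφc : ∀ i, Continuous (pdX φ i) := fun i =>
      (hφc.continuous_fderiv (by simp)).clm_apply continuous_const
    -- integrability
    have i1 : Integrable fun p => pdT w p * φ p :=
      intg _ (hpdTw.mul hφcont.continuousOn) fun p hp => by simp [hφ0 p hp]
    have i2 : Integrable fun p => w p * pdT φ p :=
      intg _ (hwct.mul hpdTφc.continuousOn) fun p hp => by simp [hφT0 p hp]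
    have i3 : Integrable fun p => w p ^ q * φ p :=
      intg _ (hwqct.mul hφcont.continuousOn) fun p hp => by simp [hφ0 p hp]
    have i5 : Integrable fun p => w p * |pdT ζ p| * (ζ p + ε) ^ (s - 1) * η p.1 ^ 2 := by
      apply intg _ (((hwct.mul hpdTζ.abs.continuousOn).mul hbc.continuousOn).mul
        hη2c.continuousOn)
      intro p hp
      rcases hvan p hp with ⟨h1, _⟩ | ⟨_, h2⟩
      · simp [h1]
      · simp [pdT, h2]
    have iSij : ∀ i j, Integrable fun p => a i j p * (pdX φ i p * pdX w j p) := by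
      intro i j
      apply intg_a i j _ ((hpdXφc i).continuousOn.mul (hpdXw j))
      intro p hp
      simp [hφX0 i p hp]
    have iS : Integrable fun p => ∑ i, ∑ j, a i j p * pdX φ i p * pdX w j p := by
      apply integrable_finset_sum
      intro i _
      apply integrable_finset_sum
      intro j _
      simpa [mul_assoc] using iSij i j
    have i6ij : ∀ i j, Integrable fun p =>
        a i j p * (pdX ζ i p * pdX w j p * ((ζ p + ε) ^ (s - 1) * η p.1 ^ 2)) := by
      intro i j
      apply intg_a i j _ (((hpdXζ i).continuousOn.mul (hpdXw j)).mul
        (hbc.continuousOn.mul hη2c.continuousOn))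
      intro p hp
      rcases hvan p hp with ⟨h1, _⟩ | ⟨_, h2⟩
      · simp [h1]
      · simp [pdX, h2]
    have i6 : Integrable fun p => S0 p * (ζ p + ε) ^ (s - 1) * η p.1 ^ 2 := by
      have heq : (fun p => S0 p * (ζ p + ε) ^ (s - 1) * η p.1 ^ 2)
          = fun p => ∑ i, ∑ j,
              a i j p * (pdX ζ i p * pdX w j p * ((ζ p + ε) ^ (s - 1) * η p.1 ^ 2)) := by
        funext p
        rw [hS0_def]
        simp only [Finset.sum_mul]
        exact Finset.sum_congr rfl fun i _ => Finset.sum_congr rfl fun j _ => by ring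
      rw [heq]
      exact integrable_finset_sum _ fun i _ => integrable_finset_sum _ fun j _ => i6ij i j
    -- integration by parts in time
    set F : Pt n → ℝ := fun p => w p * φ p with hF_def
    have hF0 : ∀ p, p ∉ K → F p = 0 := fun p hp => by simp [hF_def, hφ0 p hp]
    have hFd : ∀ p, DifferentiableAt ℝ F p := by
      intro p
      by_cases hp : p ∈ halfSpace n
      · exact (hwd p hp).mul (hφc.differentiable (by simp) p)
      · have hpK : p ∉ K := fun h => hp (hKU h)
        have h : F =ᶠ[nhds p] fun _ => (0:ℝ) :=
          Filter.eventuallyEq_of_mem (hK.isClosed.isOpen_compl.mem_nhds hpK) fun q hq =>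
            hF0 q hq
        exact h.differentiableAt_iff.mpr (differentiableAt_const 0)
    have hFT0 : ∀ p, p ∉ K → pdT F p = 0 := by
      intro p hp
      have h := fderiv_zero_of_zero_on_open (V := Kᶜ) hK.isClosed.isOpen_compl
        (fun q hq => hF0 q hq) hp
      simp [pdT, h]
    have hFTc : ContinuousOn (pdT F) (halfSpace n) :=
      ((hw.mul (hφc.of_le (by simp)).contDiffOn).continuousOn_fderiv_of_isOpen hU
        le_rfl).clm_apply continuousOn_const
    have hFTcont : Continuous (pdT F) :=
      continuous_of_continuousOn_of_zero hU hK.isClosed hKU hFTc hFT0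
    have hFTint : Integrable (pdT F) :=
      hFTcont.integrable_of_hasCompactSupport (HasCompactSupport.intro hK hFT0)
    have hIBP0 : (∫ p : Pt n, pdT F p) = 0 := by
      have inner0 : ∀ x : Xn n, (∫ t : ℝ, pdT F (t, x)) = 0 := by
        intro x
        have hder : ∀ t : ℝ, HasDerivAt (fun u : ℝ => F (u, x)) (pdT F (t, x)) t := by
          intro t
          have h1 : HasFDerivAt F (fderiv ℝ F (t, x)) (t, x) := (hFd (t, x)).hasFDerivAt
          have h2 : HasDerivAt (fun u : ℝ => ((u, x) : Pt n)) ((1 : ℝ), (0 : Xn n)) t := by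
            simpa using (hasDerivAt_id t).prodMk (hasDerivAt_const t x)
          simpa [pdT, Function.comp_def] using h1.comp_hasDerivAt t h2
        have hz : ∀ t : ℝ, t ∉ Set.Ioc (τ - 1) (T + τ + 1) → pdT F (t, x) = 0 := by
          intro t ht
          apply hFT0
          intro hmem
          exact ht ⟨by linarith [hmem.1.1], by linarith [hmem.1.2]⟩
        calc (∫ t : ℝ, pdT F (t, x))
            = ∫ t in Set.Ioc (τ - 1) (T + τ + 1), pdT F (t, x) :=
              (setIntegral_eq_integral_of_forall_compl_eq_zero hz).symm
          _ = ∫ t in (τ - 1)..(T + τ + 1), pdT F (t, x) :=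
              (intervalIntegral.integral_of_le (by linarith)).symm
          _ = F (T + τ + 1, x) - F (τ - 1, x) :=
              intervalIntegral.integral_eq_sub_of_hasDerivAt (fun t _ => hder t)
                ((hFTcont.comp (continuous_id.prodMk continuous_const)).intervalIntegrable _ _)
          _ = 0 := by
              rw [hF0 (T + τ + 1, x) (fun h => by
                  have h2 : T + τ + 1 ≤ T := h.1.2
                  linarith),
                hF0 (τ - 1, x) (fun h => by
                  have h2 : τ ≤ τ - 1 := h.1.1
                  linarith)]
              ring
      have hFTint' : Integrable (pdT F) ((volume : Measure ℝ).prod (volume : Measure (Xn n))) := by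
        rw [← MeasureTheory.Measure.volume_eq_prod]
        exact hFTint
      calc (∫ p : Pt n, pdT F p)
          = ∫ x : Xn n, ∫ t : ℝ, pdT F (t, x) := by
            rw [MeasureTheory.Measure.volume_eq_prod,
              MeasureTheory.integral_prod_symm _ hFTint']
        _ = 0 := by simp [inner0]
    have hsplit : ∀ p : Pt n, pdT F p = pdT w p * φ p + w p * pdT φ p := by
      intro p
      by_cases hp : p ∈ halfSpace n
      · have h := fderiv_fun_mul (𝕜 := ℝ) (hwd p hp) (hφc.differentiable (by simp) p)
        simp only [pdT, hF_def, h, ContinuousLinearMap.add_apply,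
          ContinuousLinearMap.smul_apply, smul_eq_mul]
        ring
      · have hpK : p ∉ K := fun h => hp (hKU h)
        rw [hFT0 p hpK, hφ0 p hpK, hφT p]
        obtain ⟨h1, h2⟩ := hvanU p hp
        simp [h1, h2]
    have hIBP : (∫ p in halfSpace n, pdT w p * φ p)
        = - ∫ p in halfSpace n, w p * pdT φ p := by
      have e1 : (∫ p in halfSpace n, pdT F p) = 0 := by
        rw [setIntegral_eq_integral_of_forall_compl_eq_zero
          (fun p hp => hFT0 p fun h => hp (hKU h))]
        exact hIBP0
      have e2 : (∫ p in halfSpace n, pdT F p)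
          = (∫ p in halfSpace n, pdT w p * φ p) + ∫ p in halfSpace n, w p * pdT φ p := by
        rw [← integral_add i1.integrableOn i2.integrableOn]
        exact integral_congr_ae (Filter.Eventually.of_forall hsplit)
      linarith [e1, e2]
    -- estimate of the time term
    have hmono : (- ∫ p in halfSpace n, w p * pdT φ p)
        ≤ ∫ p in halfSpace n, s * (w p * |pdT ζ p| * (ζ p + ε) ^ (s - 1) * η p.1 ^ 2) := by
      rw [← integral_neg]
      refine setIntegral_mono_on i2.neg.integrableOn (i5.const_mul s).integrableOn hUm ?_
      intro p hp
      show -(w p * pdT φ p) ≤ s * (w p * |pdT ζ p| * (ζ p + ε) ^ (s - 1) * η p.1 ^ 2)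
      rw [hφT p]
      have hw0 : 0 ≤ w p := hw_nonneg p hp
      have h2 : 0 ≤ w p * η p.1 ^ 2 * (s * (ζ p + ε) ^ (s - 1)) :=
        mul_nonneg (mul_nonneg hw0 (sq_nonneg _)) (mul_nonneg hs0.le (hb0 p))
      have h3 : w p * η p.1 ^ 2 * (s * (ζ p + ε) ^ (s - 1)) * (-(pdT ζ p))
          ≤ w p * η p.1 ^ 2 * (s * (ζ p + ε) ^ (s - 1)) * |pdT ζ p| :=
        mul_le_mul_of_nonneg_left (neg_le_abs _) h2
      have h4 : 0 ≤ w p * (((ζ p + ε) ^ s - ε ^ s) * (2 * η p.1 * deriv η p.1)) :=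
        mul_nonneg hw0 (mul_nonneg (by linarith [hεle p])
          (mul_nonneg (mul_nonneg two_pos.le (hη0 _)) (hη_mono _)))
      nlinarith [h3, h4]
    -- rewriting the elliptic term
    have hSptw : ∀ p : Pt n, (∑ i, ∑ j, a i j p * pdX φ i p * pdX w j p)
        = s * (S0 p * (ζ p + ε) ^ (s - 1) * η p.1 ^ 2) := by
      intro p
      rw [hS0_def]
      simp only [Finset.mul_sum, Finset.sum_mul]
      refine Finset.sum_congr rfl fun i _ => Finset.sum_congr rfl fun j _ => ?_
      rw [hφX i p]
      ring
    have hws := hw_sol φ hφc hφcs hφU hφnn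
    have key2 : (∫ p in halfSpace n, w p ^ q * φ p)
        ≤ (∫ p in halfSpace n, pdT w p * φ p)
          + s * ∫ p in halfSpace n, S0 p * (ζ p + ε) ^ (s - 1) * η p.1 ^ 2 := by
      refine le_trans hws.le ?_
      rw [integral_add i1.integrableOn iS.integrableOn]
      have h : (∫ p in halfSpace n, ∑ i, ∑ j, a i j p * pdX φ i p * pdX w j p)
          = s * ∫ p in halfSpace n, S0 p * (ζ p + ε) ^ (s - 1) * η p.1 ^ 2 := by
        rw [← integral_const_mul]
        exact integral_congr_ae (Filter.Eventually.of_forall hSptw)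
      rw [h]
    calc (∫ p in halfSpace n, w p ^ q * ((ζ p + ε) ^ s - ε ^ s) * η p.1 ^ 2)
        = ∫ p in halfSpace n, w p ^ q * φ p :=
          integral_congr_ae (Filter.Eventually.of_forall fun p => by rw [hφ_def]; ring)
      _ ≤ (∫ p in halfSpace n, pdT w p * φ p)
          + s * ∫ p in halfSpace n, S0 p * (ζ p + ε) ^ (s - 1) * η p.1 ^ 2 := key2
      _ = (- ∫ p in halfSpace n, w p * pdT φ p)
          + s * ∫ p in halfSpace n, S0 p * (ζ p + ε) ^ (s - 1) * η p.1 ^ 2 := by rw [hIBP]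
      _ ≤ (∫ p in halfSpace n, s * (w p * |pdT ζ p| * (ζ p + ε) ^ (s - 1) * η p.1 ^ 2))
          + s * ∫ p in halfSpace n, S0 p * (ζ p + ε) ^ (s - 1) * η p.1 ^ 2 :=
          add_le_add_left hmono _
      _ = s * (∫ p in halfSpace n, w p * |pdT ζ p| * (ζ p + ε) ^ (s - 1) * η p.1 ^ 2)
          + s * ∫ p in halfSpace n, S0 p * (ζ p + ε) ^ (s - 1) * η p.1 ^ 2 := by
          rw [integral_const_mul]
  ------------------------------------------------------------------
  -- pass to the limit ε = 1/(k+1) → 0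
  ------------------------------------------------------------------
  set e : ℕ → ℝ := fun k => 1 / ((k : ℝ) + 1) with he_def
  have he0 : ∀ k, 0 < e k := fun k => by positivity
  have he1 : ∀ k, e k ≤ 1 := by
    intro k
    rw [he_def, div_le_one (by positivity)]
    simp
  have helim : Filter.Tendsto e Filter.atTop (nhds 0) :=
    tendsto_one_div_add_atTop_nhds_zero_nat
  have hbase : ∀ p : Pt n, Filter.Tendsto (fun k => ζ p + e k) Filter.atTop (nhds (ζ p)) := by
    intro p
    simpa using (tendsto_const_nhds (x := ζ p)).add helim
  have hrp : ∀ (p : Pt n) (c : ℝ), 0 ≤ c →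
      Filter.Tendsto (fun k => (ζ p + e k) ^ c) Filter.atTop (nhds (ζ p ^ c)) := fun p c hc =>
    ((Real.continuousAt_rpow_const (ζ p) c (Or.inr hc)).tendsto).comp (hbase p)
  have hεs : Filter.Tendsto (fun k => (e k) ^ s) Filter.atTop (nhds 0) := by
    have h := ((Real.continuousAt_rpow_const 0 s (Or.inr hs0.le)).tendsto).comp helim
    rwa [Real.zero_rpow (ne_of_gt hs0)] at h
  have hwμ : AEMeasurable w (volume.restrict (halfSpace n)) := hwct.aemeasurable hUm
  have hwqμ : AEMeasurable (fun p => w p ^ q) (volume.restrict (halfSpace n)) :=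
    hwqct.aemeasurable hUm
  have hbkc : ∀ k, Continuous fun p : Pt n => (ζ p + e k) ^ (s - 1) := fun k =>
    (hζc.add continuous_const).rpow_const fun p =>
      Or.inl (ne_of_gt (add_pos_of_nonneg_of_pos (hζ0 p) (he0 k)))
  have hbkle : ∀ (k) (p : Pt n), (ζ p + e k) ^ (s - 1) ≤ 2 ^ (s - 1) := fun k p =>
    Real.rpow_le_rpow (by linarith [hζ0 p, (he0 k).le]) (by linarith [hζ1 p, he1 k])
      (by linarith)
  have hbk0 : ∀ (k) (p : Pt n), 0 ≤ (ζ p + e k) ^ (s - 1) := fun k p =>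
    Real.rpow_nonneg (by linarith [hζ0 p, (he0 k).le]) _
  -- limit of the first term
  have T1 : Filter.Tendsto
      (fun k => ∫ p in halfSpace n, w p * |pdT ζ p| * (ζ p + e k) ^ (s - 1) * η p.1 ^ 2)
      Filter.atTop
      (nhds (∫ p in halfSpace n, w p * |pdT ζ p| * ζ p ^ (s - 1) * η p.1 ^ 2)) := by
    apply tendsto_integral_of_dominated_convergence
      (K.indicator fun p => w p * |pdT ζ p| * 2 ^ (s - 1) * η p.1 ^ 2)
    · intro k
      exact (((hwμ.mul hpdTζ.abs.aemeasurable).mul (hbkc k).aemeasurable).mul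
        hη2c.aemeasurable).aestronglyMeasurable
    · have hio : IntegrableOn (fun p => w p * |pdT ζ p| * 2 ^ (s - 1) * η p.1 ^ 2) K := by
        apply ContinuousOn.integrableOn_compact hK
        exact ((((hwct.mul hpdTζ.abs.continuousOn).mul continuousOn_const).mul
          hη2c.continuousOn)).mono hKU
      exact (hio.integrable_indicator hK.measurableSet).restrict
    · intro k
      rw [ae_restrict_iff' hUm]
      refine Filter.Eventually.of_forall fun p hp => ?_
      by_cases hpK : p ∈ K
      · rw [Set.indicator_of_mem hpK]
        have hw0 := hw_nonneg p hp
        have h1 : 0 ≤ w p * |pdT ζ p| := mul_nonneg hw0 (abs_nonneg _)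
        rw [Real.norm_eq_abs, abs_of_nonneg
          (mul_nonneg (mul_nonneg h1 (hbk0 k p)) (sq_nonneg _))]
        exact mul_le_mul_of_nonneg_right
          (mul_le_mul_of_nonneg_left (hbkle k p) h1) (sq_nonneg _)
      · have hz : w p * |pdT ζ p| * (ζ p + e k) ^ (s - 1) * η p.1 ^ 2 = 0 := by
          rcases hvan p hpK with ⟨h1, _⟩ | ⟨_, h2⟩
          · simp [h1]
          · simp [pdT, h2]
        rw [hz, Set.indicator_of_notMem hpK]
        simp
    · refine Filter.Eventually.of_forall fun p => ?_
      exact ((hrp p (s - 1) (by linarith)).const_mul (w p * |pdT ζ p|)).mul_const (η p.1 ^ 2)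
  -- limit of the second term
  have T2 : Filter.Tendsto
      (fun k => ∫ p in halfSpace n, S0 p * (ζ p + e k) ^ (s - 1) * η p.1 ^ 2)
      Filter.atTop
      (nhds (∫ p in halfSpace n, S0 p * ζ p ^ (s - 1) * η p.1 ^ 2)) := by
    have hS0abs : ∀ p ∈ K, |S0 p| ≤ M * ∑ i, ∑ j, |pdX ζ i p| * |pdX w j p| := by
      intro p hpK
      rw [hS0_def]
      calc |∑ i, ∑ j, a i j p * pdX ζ i p * pdX w j p|
          ≤ ∑ i, ∑ j, |a i j p * pdX ζ i p * pdX w j p| := by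
            refine (Finset.abs_sum_le_sum_abs _ _).trans ?_
            exact Finset.sum_le_sum fun i _ => Finset.abs_sum_le_sum_abs _ _
        _ ≤ ∑ i, ∑ j, M * (|pdX ζ i p| * |pdX w j p|) := by
            refine Finset.sum_le_sum fun i _ => Finset.sum_le_sum fun j _ => ?_
            rw [abs_mul, abs_mul, ← mul_assoc]
            exact mul_le_mul_of_nonneg_right
              (mul_le_mul_of_nonneg_right (hMb i j p hpK) (abs_nonneg _)) (abs_nonneg _)
        _ = M * ∑ i, ∑ j, |pdX ζ i p| * |pdX w j p| := by
            simp [Finset.mul_sum]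
    have hSig0 : ∀ p : Pt n, 0 ≤ ∑ i, ∑ j, |pdX ζ i p| * |pdX w j p| := fun p =>
      Finset.sum_nonneg fun i _ => Finset.sum_nonneg fun j _ =>
        mul_nonneg (abs_nonneg _) (abs_nonneg _)
    apply tendsto_integral_of_dominated_convergence
      (K.indicator fun p =>
        (∑ i, ∑ j, |pdX ζ i p| * |pdX w j p|) * (M * 2 ^ (s - 1)) * η p.1 ^ 2)
    · intro k
      exact ((hS0meas.mul (hbkc k).aemeasurable).mul hη2c.aemeasurable).aestronglyMeasurable
    · have hio : IntegrableOn (fun p =>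
          (∑ i, ∑ j, |pdX ζ i p| * |pdX w j p|) * (M * 2 ^ (s - 1)) * η p.1 ^ 2) K := by
        apply ContinuousOn.integrableOn_compact hK
        refine ((ContinuousOn.mul ?_ continuousOn_const).mul hη2c.continuousOn).mono hKU
        apply continuousOn_finset_sum
        intro i _
        apply continuousOn_finset_sum
        intro j _
        exact (hpdXζ i).abs.continuousOn.mul (hpdXw j).abs
      exact (hio.integrable_indicator hK.measurableSet).restrict
    · intro k
      rw [ae_restrict_iff' hUm]
      refine Filter.Eventually.of_forall fun p hp => ?_
      by_cases hpK : p ∈ K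
      · rw [Set.indicator_of_mem hpK, Real.norm_eq_abs]
        have h1 : |S0 p * (ζ p + e k) ^ (s - 1) * η p.1 ^ 2|
            = |S0 p| * (ζ p + e k) ^ (s - 1) * η p.1 ^ 2 := by
          rw [abs_mul, abs_mul, abs_of_nonneg (hbk0 k p), abs_of_nonneg (sq_nonneg (η p.1))]
        rw [h1]
        calc |S0 p| * (ζ p + e k) ^ (s - 1) * η p.1 ^ 2
            ≤ (M * ∑ i, ∑ j, |pdX ζ i p| * |pdX w j p|) * (ζ p + e k) ^ (s - 1) * η p.1 ^ 2 := by
              exact mul_le_mul_of_nonneg_right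
                (mul_le_mul_of_nonneg_right (hS0abs p hpK) (hbk0 k p)) (sq_nonneg _)
          _ ≤ (M * ∑ i, ∑ j, |pdX ζ i p| * |pdX w j p|) * 2 ^ (s - 1) * η p.1 ^ 2 := by
              refine mul_le_mul_of_nonneg_right
                (mul_le_mul_of_nonneg_left (hbkle k p) ?_) (sq_nonneg _)
              exact mul_nonneg hM0 (hSig0 p)
          _ = (∑ i, ∑ j, |pdX ζ i p| * |pdX w j p|) * (M * 2 ^ (s - 1)) * η p.1 ^ 2 := by
              ring
      · have hz : S0 p * (ζ p + e k) ^ (s - 1) * η p.1 ^ 2 = 0 := by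
          rcases hvan p hpK with ⟨h1, _⟩ | ⟨_, h2⟩
          · simp [h1]
          · simp [hS0_def, pdX, h2]
        rw [hz, Set.indicator_of_notMem hpK]
        simp
    · refine Filter.Eventually.of_forall fun p => ?_
      exact ((hrp p (s - 1) (by linarith)).const_mul (S0 p)).mul_const (η p.1 ^ 2)
  -- limit of the right-hand side
  have T3 : Filter.Tendsto
      (fun k => ∫ p in halfSpace n, w p ^ q * ((ζ p + e k) ^ s - (e k) ^ s) * η p.1 ^ 2)
      Filter.atTop
      (nhds (∫ p in halfSpace n, w p ^ q * ζ p ^ s * η p.1 ^ 2)) := by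
    apply tendsto_integral_of_dominated_convergence
      (K.indicator fun p => w p ^ q * 2 ^ s * η p.1 ^ 2)
    · intro k
      have hc : Continuous fun p : Pt n => (ζ p + e k) ^ s - (e k) ^ s :=
        ((hζc.add continuous_const).rpow_const fun p =>
          Or.inl (ne_of_gt (add_pos_of_nonneg_of_pos (hζ0 p) (he0 k)))).sub continuous_const
      exact ((hwqμ.mul hc.aemeasurable).mul hη2c.aemeasurable).aestronglyMeasurable
    · have hio : IntegrableOn (fun p => w p ^ q * 2 ^ s * η p.1 ^ 2) K := by
        apply ContinuousOn.integrableOn_compact hK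
        exact ((hwqct.mul continuousOn_const).mul hη2c.continuousOn).mono hKU
      exact (hio.integrable_indicator hK.measurableSet).restrict
    · intro k
      rw [ae_restrict_iff' hUm]
      refine Filter.Eventually.of_forall fun p hp => ?_
      by_cases hpK : p ∈ K
      · rw [Set.indicator_of_mem hpK, Real.norm_eq_abs]
        have hwq0 : 0 ≤ w p ^ q := Real.rpow_nonneg (hw_nonneg p hp) _
        have hA0 : 0 ≤ (ζ p + e k) ^ s - (e k) ^ s := by
          have : (e k) ^ s ≤ (ζ p + e k) ^ s :=
            Real.rpow_le_rpow (he0 k).le (by linarith [hζ0 p]) hs0.le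
          linarith
        have hA2 : (ζ p + e k) ^ s - (e k) ^ s ≤ 2 ^ s := by
          have h2 : (ζ p + e k) ^ s ≤ 2 ^ s :=
            Real.rpow_le_rpow (by linarith [hζ0 p, (he0 k).le])
              (by linarith [hζ1 p, he1 k]) hs0.le
          have h3 : 0 ≤ (e k) ^ s := Real.rpow_nonneg (he0 k).le _
          linarith
        rw [abs_of_nonneg (mul_nonneg (mul_nonneg hwq0 hA0) (sq_nonneg _))]
        exact mul_le_mul_of_nonneg_right
          (mul_le_mul_of_nonneg_left hA2 hwq0) (sq_nonneg _)
      · have hz : w p ^ q * ((ζ p + e k) ^ s - (e k) ^ s) * η p.1 ^ 2 = 0 := by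
          rcases hvan p hpK with ⟨h1, _⟩ | ⟨h1, _⟩
          · simp [h1]
          · simp [h1]
        rw [hz, Set.indicator_of_notMem hpK]
        simp
    · refine Filter.Eventually.of_forall fun p => ?_
      have h := (hrp p s hs0.le).sub hεs
      rw [sub_zero] at h
      exact (h.const_mul (w p ^ q)).mul_const (η p.1 ^ 2)
  -- the limiting inequality on the half-space
  have hlim : (∫ p in halfSpace n, w p ^ q * ζ p ^ s * η p.1 ^ 2)
      ≤ s * (∫ p in halfSpace n, w p * |pdT ζ p| * ζ p ^ (s - 1) * η p.1 ^ 2)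
        + s * (∫ p in halfSpace n, S0 p * ζ p ^ (s - 1) * η p.1 ^ 2) :=
    le_of_tendsto_of_tendsto' T3 ((T1.const_mul s).add (T2.const_mul s))
      fun k => key (e k) (he0 k) (he1 k)
  ------------------------------------------------------------------
  -- transfer the integrals to the cylinder (0,T) × B(R)
  ------------------------------------------------------------------
  have hnotmem : ∀ p : Pt n, p ∉ Set.Ioo (0:ℝ) T ×ˢ Metric.ball (0 : Xn n) R →
      p.1 ≤ 0 ∨ T ≤ p.1 ∨ R ≤ ‖p.2‖ := by
    intro p hp
    by_contra hcon
    push_neg at hcon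
    obtain ⟨h1, h2, h3⟩ := hcon
    exact hp ⟨⟨h1, h2⟩, by simpa [Metric.mem_ball, dist_eq_norm] using h3⟩
  have hzero1 : ∀ p : Pt n, (p.1 ≤ 0 ∨ T ≤ p.1 ∨ R ≤ ‖p.2‖) →
      ζ p ^ (s - 1) * η p.1 ^ 2 = 0 ∧ ζ p ^ s * η p.1 ^ 2 = 0 := by
    intro p hp
    have hcase : η p.1 = 0 ∨ ζ p = 0 := by
      rcases hp with h | h | h
      · exact Or.inl (hηz p.1 (by linarith)).1
      · exact Or.inr (hζcl p (Or.inl h))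
      · exact Or.inr (hζcl p (Or.inr h))
    rcases hcase with h | h
    · simp [h]
    · rw [h]
      rw [Real.zero_rpow (ne_of_gt hs1), Real.zero_rpow (ne_of_gt hs0)]
      simp
  have conv : ∀ f : Pt n → ℝ,
      (∀ p : Pt n, p ∉ Set.Ioo (0:ℝ) T ×ˢ Metric.ball (0 : Xn n) R → f p = 0) →
      (∀ p : Pt n, p ∉ halfSpace n → f p = 0) →
      (∫ p in Set.Ioo (0:ℝ) T ×ˢ Metric.ball (0 : Xn n) R, f p) = ∫ p in halfSpace n, f p := by
    intro f h1 h2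
    rw [setIntegral_eq_integral_of_forall_compl_eq_zero h1,
      setIntegral_eq_integral_of_forall_compl_eq_zero h2]
  have c1 : (∫ p in Set.Ioo (0:ℝ) T ×ˢ Metric.ball (0 : Xn n) R,
      w p * |pdT ζ p| * ζ p ^ (s - 1) * η p.1 ^ 2)
      = ∫ p in halfSpace n, w p * |pdT ζ p| * ζ p ^ (s - 1) * η p.1 ^ 2 := by
    apply conv
    · intro p hp
      obtain ⟨hz, _⟩ := hzero1 p (hnotmem p hp)
      calc w p * |pdT ζ p| * ζ p ^ (s - 1) * η p.1 ^ 2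
          = w p * |pdT ζ p| * (ζ p ^ (s - 1) * η p.1 ^ 2) := by ring
        _ = 0 := by rw [hz, mul_zero]
    · intro p hp
      simp [(hvanU p hp).1]
  have c2 : (∫ p in Set.Ioo (0:ℝ) T ×ˢ Metric.ball (0 : Xn n) R,
      S0 p * ζ p ^ (s - 1) * η p.1 ^ 2)
      = ∫ p in halfSpace n, S0 p * ζ p ^ (s - 1) * η p.1 ^ 2 := by
    apply conv
    · intro p hp
      obtain ⟨hz, _⟩ := hzero1 p (hnotmem p hp)
      calc S0 p * ζ p ^ (s - 1) * η p.1 ^ 2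
          = S0 p * (ζ p ^ (s - 1) * η p.1 ^ 2) := by ring
        _ = 0 := by rw [hz, mul_zero]
    · intro p hp
      simp [(hvanU p hp).1]
  have c3 : (∫ p in Set.Ioo (0:ℝ) T ×ˢ Metric.ball (0 : Xn n) R,
      w p ^ q * ζ p ^ s * η p.1 ^ 2)
      = ∫ p in halfSpace n, w p ^ q * ζ p ^ s * η p.1 ^ 2 := by
    apply conv
    · intro p hp
      obtain ⟨_, hz⟩ := hzero1 p (hnotmem p hp)
      calc w p ^ q * ζ p ^ s * η p.1 ^ 2
          = w p ^ q * (ζ p ^ s * η p.1 ^ 2) := by ring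
        _ = 0 := by rw [hz, mul_zero]
    · intro p hp
      simp [(hvanU p hp).1]
  have hlim2 := hlim
  rw [← c1, ← c2, ← c3] at hlim2
  simp only [hS0_def] at hlim2
  exact hlim2



end
end
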